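/- arXiv:1909.08733 — 6 statements merged into one kernel-verified Lean document; each statement's English description precedes it below -/
import Mathlib

section
/- Let μ be a Borel probability measure on ℝ^d absolutely continuous with respect to Lebesgue measure, let X_1,…,X_n be i.i.d. random vectors with law μ, and let h_1,…,h_n be n distinct points of [0,1]^d. Then for every pair of distinct permutations σ_1 ≠ σ_2 of {1,…,n}, P( Σ_{i=1}^n ‖X_i − h_{σ_1(i)}‖² = Σ_{i=1}^n ‖X_i − h_{σ_2(i)}‖² ) = 0; consequently, almost surely the minimizer of σ ↦ Σ_{i=1}^n ‖X_i − h_{σ(i)}‖² over all permutations σ of {1,…,n} is unique. -/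
/-!
Because `σ ↦ ∑ i, ‖h (σ i)‖²` is constant, the difference of the costs of two assignments
`σ ≠ τ` is the linear functional `y ↦ 2 ∑ i, ⟪h (τ i) - h (σ i), y i⟫` of the data, which is
nonzero since `h` is injective. Its kernel is a proper subspace, hence Lebesgue-null, and the
joint law of `(X_1, …, X_n)`, the product `μ^{⊗n}`, is absolutely continuous. So almost surely
the `n!` costs are pairwise distinct and their minimum is attained only once.
-/

open MeasureTheory ProbabilityTheory Filter Topology
open scoped ENNReal NNReal

noncomputable section

/-- `Euc d` is the Euclidean space `ℝ^d` with its Euclidean norm. -/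
abbrev Euc (d : ℕ) : Type := EuclideanSpace ℝ (Fin d)

/-- The unit cube `[0,1]^d`. -/
def unitCube (d : ℕ) : Set (Euc d) := {x | ∀ i, x i ∈ Set.Icc (0 : ℝ) 1}

/-- A permutation `σ` is an optimal assignment of the points `x` to the points `h` if it
minimizes `σ ↦ ∑ i ‖x i − h (σ i)‖²` over all permutations. -/
def IsOptAssign {d n : ℕ} (x h : Fin n → Euc d) (σ : Equiv.Perm (Fin n)) : Prop :=
  ∀ τ : Equiv.Perm (Fin n), ∑ i, ‖x i - h (σ i)‖ ^ 2 ≤ ∑ i, ‖x i - h (τ i)‖ ^ 2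

namespace MeasureTheory.Measure.AbsolutelyContinuous

theorem pi_fin {m : ℕ} {α : Fin m → Type*} [∀ i, MeasurableSpace (α i)]
    {μ ν : ∀ i, Measure (α i)} [∀ i, SigmaFinite (μ i)] [∀ i, SigmaFinite (ν i)]
    (h : ∀ i, μ i ≪ ν i) : Measure.pi μ ≪ Measure.pi ν := by
  induction m with
  | zero => rw [Measure.pi_of_empty, Measure.pi_of_empty]
  | succ m ih =>
    rw [← (measurePreserving_piFinSuccAbove μ 0).symm.map_eq,
      ← (measurePreserving_piFinSuccAbove ν 0).symm.map_eq]
    exact ((h 0).prod (ih fun i => h _)).map (MeasurableEquiv.measurable _)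

theorem pi {ι : Type*} [Fintype ι] {α : ι → Type*} [∀ i, MeasurableSpace (α i)]
    {μ ν : ∀ i, Measure (α i)} [∀ i, SigmaFinite (μ i)] [∀ i, SigmaFinite (ν i)]
    (h : ∀ i, μ i ≪ ν i) : Measure.pi μ ≪ Measure.pi ν := by
  let e := (Fintype.equivFin ι).symm
  rw [← Measure.pi_map_piCongrLeft e μ, ← Measure.pi_map_piCongrLeft e ν]
  exact (pi_fin fun i => h (e i)).map (MeasurableEquiv.measurable _)

end MeasureTheory.Measure.AbsolutelyContinuous

section Assignment

variable {ι E : Type*} [Fintype ι] [NormedAddCommGroup E] [InnerProductSpace ℝ E]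

def piInnerₗ (a : ι → E) : (ι → E) →ₗ[ℝ] ℝ :=
  ∑ i, (innerₛₗ ℝ (a i)).comp (LinearMap.proj i)

theorem piInnerₗ_apply (a y : ι → E) : piInnerₗ a y = ∑ i, inner ℝ (a i) (y i) := by
  simp [piInnerₗ]

theorem ker_piInnerₗ_ne_top {a : ι → E} (ha : a ≠ 0) : LinearMap.ker (piInnerₗ a) ≠ ⊤ := by
  classical
  obtain ⟨i, hi⟩ := Function.ne_iff.mp ha
  rw [Ne, Submodule.eq_top_iff']
  push Not
  refine ⟨Pi.single i (a i), ?_⟩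
  rw [LinearMap.mem_ker, piInnerₗ_apply, Finset.sum_eq_single i (fun j _ hj => by simp [hj])
    (by simp), Pi.single_eq_same, real_inner_self_eq_norm_sq]
  exact pow_ne_zero 2 (norm_ne_zero_iff.mpr hi)

def assignCost (y h : ι → E) (σ : Equiv.Perm ι) : ℝ := ∑ i, ‖y i - h (σ i)‖ ^ 2

theorem assignCost_sub_assignCost (y h : ι → E) (σ τ : Equiv.Perm ι) :
    assignCost y h σ - assignCost y h τ = 2 * piInnerₗ (fun i => h (τ i) - h (σ i)) y := by
  have hσ := Equiv.sum_comp σ fun i => ‖h i‖ ^ 2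
  have hτ := Equiv.sum_comp τ fun i => ‖h i‖ ^ 2
  simp only [assignCost, piInnerₗ_apply, norm_sub_sq_real, Finset.sum_add_distrib,
    Finset.sum_sub_distrib, ← Finset.mul_sum, real_inner_comm (y _), inner_sub_right, hσ, hτ]
  ring

theorem assignCost_eq_iff (y h : ι → E) (σ τ : Equiv.Perm ι) :
    assignCost y h σ = assignCost y h τ ↔
      y ∈ LinearMap.ker (piInnerₗ fun i => h (τ i) - h (σ i)) := by
  rw [LinearMap.mem_ker, ← sub_eq_zero, assignCost_sub_assignCost]
  simp

variable [FiniteDimensional ℝ E] [MeasurableSpace E] [BorelSpace E]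

theorem addHaar_assignCost_eq (ν : Measure (ι → E)) [ν.IsAddHaarMeasure] {h : ι → E}
    (hh : Function.Injective h) {σ τ : Equiv.Perm ι} (hστ : σ ≠ τ) :
    ν {y | assignCost y h σ = assignCost y h τ} = 0 := by
  obtain ⟨i, hi⟩ : ∃ i, σ i ≠ τ i := not_forall.mp (mt Equiv.ext hστ)
  have ha : (fun i => h (τ i) - h (σ i)) ≠ 0 :=
    Function.ne_iff.mpr ⟨i, sub_ne_zero.mpr (hh.ne hi.symm)⟩
  simp_rw [assignCost_eq_iff]
  exact Measure.addHaar_submodule ν _ (ker_piInnerₗ_ne_top ha)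

end Assignment

theorem Function.Injective.existsUnique_forall_le {α β : Type*} [Finite α] [Nonempty α]
    [LinearOrder β] {f : α → β} (hf : Function.Injective f) : ∃! a, ∀ b, f a ≤ f b := by
  obtain ⟨a, ha⟩ := Finite.exists_min f
  exact ⟨a, ha, fun b hb => hf (le_antisymm (hb a) (ha b))⟩

theorem stmt0_general
    {d n : ℕ} {Ω : Type*} [MeasurableSpace Ω] (P : Measure Ω)
    (μ : Measure (Euc d)) [IsProbabilityMeasure μ] (hac : μ ≪ volume)
    (X : Fin n → Ω → Euc d) (hXmeas : ∀ i, Measurable (X i))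
    (hindep : iIndepFun X P)
    (hlaw : ∀ i, Measure.map (X i) P = μ)
    (h : Fin n → Euc d) (hinj : Function.Injective h) :
    (∀ σ₁ σ₂ : Equiv.Perm (Fin n), σ₁ ≠ σ₂ →
      P {ω | ∑ i, ‖X i ω - h (σ₁ i)‖ ^ 2 = ∑ i, ‖X i ω - h (σ₂ i)‖ ^ 2} = 0) ∧
    (∀ᵐ ω ∂P, ∃! σ : Equiv.Perm (Fin n), IsOptAssign (fun i => X i ω) h σ) := by
  set T : Ω → (Fin n → Euc d) := fun ω i => X i ω
  have hT : Measure.QuasiMeasurePreserving T P volume := by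
    refine ⟨measurable_pi_lambda _ hXmeas, ?_⟩
    rw [hindep.map_fun_eq_pi_map fun i => (hXmeas i).aemeasurable, funext hlaw, volume_pi]
    exact Measure.AbsolutelyContinuous.pi fun _ => hac
  have hnull : ∀ σ₁ σ₂ : Equiv.Perm (Fin n), σ₁ ≠ σ₂ →
      P {ω | assignCost (T ω) h σ₁ = assignCost (T ω) h σ₂} = 0 := fun σ₁ σ₂ hne =>
    hT.preimage_null (s := {y | assignCost y h σ₁ = assignCost y h σ₂})
      (addHaar_assignCost_eq volume hinj hne)
  refine ⟨hnull, ?_⟩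
  have hinj_ae : ∀ᵐ ω ∂P, Function.Injective (assignCost (T ω) h) := by
    simp only [Function.Injective, ae_all_iff]
    intro σ₁ σ₂
    rcases eq_or_ne σ₁ σ₂ with rfl | hne
    · exact ae_of_all _ fun _ _ => rfl
    · filter_upwards [measure_eq_zero_iff_ae_notMem.mp (hnull σ₁ σ₂ hne)] with ω hω heq
      exact (hω heq).elim
  filter_upwards [hinj_ae] with ω hω
  exact hω.existsUnique_forall_le

/-- If `X_1,…,X_n` are i.i.d. with law `μ` absolutely continuous w.r.t. Lebesgue measure and
`h_1,…,h_n` are distinct points of `[0,1]^d`, then for any two distinct permutations the two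
assignment costs coincide with probability zero; consequently, almost surely the optimal
assignment is unique. -/
theorem stmt0
    {d n : ℕ} {Ω : Type*} [MeasurableSpace Ω] (P : Measure Ω) [IsProbabilityMeasure P]
    (μ : Measure (Euc d)) [IsProbabilityMeasure μ] (hac : μ ≪ volume)
    (X : Fin n → Ω → Euc d) (hXmeas : ∀ i, Measurable (X i))
    (hindep : iIndepFun X P)
    (hlaw : ∀ i, Measure.map (X i) P = μ)
    (h : Fin n → Euc d) (hcube : ∀ i, h i ∈ unitCube d) (hinj : Function.Injective h) :
    (∀ σ₁ σ₂ : Equiv.Perm (Fin n), σ₁ ≠ σ₂ →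
      P {ω | ∑ i, ‖X i ω - h (σ₁ i)‖ ^ 2 = ∑ i, ‖X i ω - h (σ₂ i)‖ ^ 2} = 0) ∧
    (∀ᵐ ω ∂P, ∃! σ : Equiv.Perm (Fin n), IsOptAssign (fun i => X i ω) h σ) :=
  stmt0_general P μ hac X hXmeas hindep hlaw h hinj

end
end

section
/- Let μ ∈ 𝒫_ac(ℝ^d) and let R be a population rank map of μ, say R = ∇φ μ-a.e. for a convex function φ : ℝ^d → ℝ. Fix a ∈ ℝ^d and b > 0, and let μ' be the pushforward of μ under x ↦ a + b x. Then the map R'(x) := R((x − a)/b) is a population rank map of μ': it coincides μ'-a.e. with the gradient of the convex function ψ(x) := b·φ((x − a)/b) and pushes μ' forward to 𝒰^d. Consequently, if Z_1 ∈ ℝ^{d_1} and Z_2 ∈ ℝ^{d_2} are jointly distributed with absolutely continuous marginal laws, then for all a_1 ∈ ℝ^{d_1}, a_2 ∈ ℝ^{d_2} and b_1, b_2 > 0, RdCov²(a_1 + b_1 Z_1, a_2 + b_2 Z_2) = RdCov²(Z_1, Z_2), where each rank distance covariance is computed with population rank maps of the corresponding marginal laws. -/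
open MeasureTheory ProbabilityTheory Filter Topology
open scoped ENNReal NNReal

noncomputable section

/-- The uniform distribution `𝒰^d` on `[0,1]^d`. -/
def unifCube (d : ℕ) : Measure (Euc d) := volume.restrict (unitCube d)

/-- A population rank map of `μ ∈ 𝒫_ac(ℝ^d)`: a measurable map coinciding `μ`-a.e. with the
gradient of a convex function and pushing `μ` forward to the uniform distribution on the
unit cube. -/
def IsRankMap {d : ℕ} (μ : Measure (Euc d)) (R : Euc d → Euc d) : Prop :=
  Measurable R ∧
    (∃ φ : Euc d → ℝ, ConvexOn ℝ Set.univ φ ∧ ∀ᵐ x ∂μ, HasGradientAt φ (R x) x) ∧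
    Measure.map R μ = unifCube d

/-- The population rank distance covariance `RdCov²` of a joint law `ν` on `ℝ^{d₁} × ℝ^{d₂}`,
relative to rank maps `R₁, R₂` of its marginals. -/
def RdCovSq {d₁ d₂ : ℕ} (ν : Measure (Euc d₁ × Euc d₂))
    (R₁ : Euc d₁ → Euc d₁) (R₂ : Euc d₂ → Euc d₂) : ℝ :=
  (∫ p : (Euc d₁ × Euc d₂) × (Euc d₁ × Euc d₂),
      ‖R₁ p.1.1 - R₁ p.2.1‖ * ‖R₂ p.1.2 - R₂ p.2.2‖ ∂ ν.prod ν)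
  + (∫ p : (Euc d₁ × Euc d₂) × (Euc d₁ × Euc d₂), ‖R₁ p.1.1 - R₁ p.2.1‖ ∂ ν.prod ν)
    * (∫ p : (Euc d₁ × Euc d₂) × (Euc d₁ × Euc d₂), ‖R₂ p.1.2 - R₂ p.2.2‖ ∂ ν.prod ν)
  - 2 * (∫ p : (Euc d₁ × Euc d₂) × (Euc d₁ × Euc d₂) × (Euc d₁ × Euc d₂),
      ‖R₁ p.1.1 - R₁ p.2.1.1‖ * ‖R₂ p.1.2 - R₂ p.2.2.2‖ ∂ ν.prod (ν.prod ν))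

/-!
Rescaling by `x ↦ a + b x` turns the potential `φ` into `ψ x = b φ((x - a)/b)`, whose gradient
at `a + b z` is `∇φ(z)`, and the rank map `x ↦ R((x - a)/b)` undoes the rescaling before
applying `R`, so it still pushes the rescaled law to the uniform law on the cube.

`RdCov²` only depends on the joint law of the two ranks, so the invariance reduces to the
`μ`-a.e. uniqueness of rank maps. If `R = ∇φ` and `S = ∇ψ` push `μ` to the same law, put
`H = φ* - ψ*` (Fenchel conjugates). Equality in the Fenchel–Young inequality gives
`H ∘ R ≤ ψ - φ ≤ H ∘ S` a.e.; two real variables with the same law, one dominating the other,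
agree a.e., so the Fenchel–Young inequality for `φ` is an equality at `S x`, i.e. `S x` is a
subgradient of `φ` at `x` and hence equals `∇φ(x) = R x`.
-/

open scoped RealInnerProductSpace

section EqualLaws

variable {α β : Type*} [MeasurableSpace α] [MeasurableSpace β] {μ : Measure α}

theorem ae_comp_of_map_eq {R S : α → β} (hR : AEMeasurable R μ) (hS : AEMeasurable S μ)
    (hmap : μ.map R = μ.map S) {P : β → Prop} (hP : MeasurableSet {y | P y})
    (h : ∀ᵐ x ∂μ, P (R x)) : ∀ᵐ x ∂μ, P (S x) :=
  (ae_map_iff hS hP).1 (hmap ▸ (ae_map_iff hR hP).2 h)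

theorem ae_eq_of_map_eq_of_ae_le [IsFiniteMeasure μ] {F G : α → ℝ} (hF : AEMeasurable F μ)
    (hG : AEMeasurable G μ) (hmap : μ.map F = μ.map G) (hle : G ≤ᵐ[μ] F) : F =ᵐ[μ] G := by
  -- `arctan` is bounded and strictly increasing: the integrals exist and detect a.e. equality
  have hint : ∀ H : α → ℝ, AEMeasurable H μ → Integrable (fun x => Real.arctan (H x)) μ :=
    fun H hH => Integrable.of_bound
      (Real.measurable_arctan.comp_aemeasurable hH).aestronglyMeasurable
      (Real.pi / 2) (Eventually.of_forall fun x => by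
        simpa [Real.norm_eq_abs, abs_le] using
          ⟨(Real.neg_pi_div_two_lt_arctan _).le, (Real.arctan_lt_pi_div_two _).le⟩)
  have heq : ∫ x, Real.arctan (G x) ∂μ = ∫ x, Real.arctan (F x) ∂μ := by
    rw [← integral_map hG Real.continuous_arctan.aestronglyMeasurable,
      ← integral_map hF Real.continuous_arctan.aestronglyMeasurable, hmap]
  have := (integral_eq_iff_of_ae_le (hint G hG) (hint F hF)
    (hle.mono fun x hx => Real.arctan_strictMono.monotone hx)).1 heq
  filter_upwards [this] with x hx
  exact (Real.arctan_strictMono.injective hx).symm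

end EqualLaws

section ConvexAnalysis

variable {E : Type*} [NormedAddCommGroup E] [InnerProductSpace ℝ E]

def fenchelConjugate (φ : E → ℝ) (y : E) : EReal := ⨆ x, ((⟪x, y⟫ - φ x : ℝ) : EReal)

theorem le_fenchelConjugate (φ : E → ℝ) (x y : E) :
    ((⟪x, y⟫ - φ x : ℝ) : EReal) ≤ fenchelConjugate φ y :=
  le_iSup (fun x => ((⟪x, y⟫ - φ x : ℝ) : EReal)) x

theorem le_toReal_fenchelConjugate {φ : E → ℝ} {y : E} (hy : fenchelConjugate φ y ≠ ⊤) (x : E) :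
    ⟪x, y⟫ - φ x ≤ (fenchelConjugate φ y).toReal := by
  simpa only [EReal.toReal_coe] using
    EReal.toReal_le_toReal (le_fenchelConjugate φ x y) (EReal.coe_ne_bot _) hy

theorem fenchelConjugate_le_iff {φ : E → ℝ} {x y : E} :
    fenchelConjugate φ y ≤ ((⟪x, y⟫ - φ x : ℝ) : EReal) ↔ ∀ z, φ x + ⟪y, z - x⟫ ≤ φ z := by
  simp only [fenchelConjugate, iSup_le_iff, EReal.coe_le_coe_iff, inner_sub_right,
    real_inner_comm y]
  exact forall_congr' fun z => by constructor <;> intro h <;> linarith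

theorem measurable_fenchelConjugate [MeasurableSpace E] [OpensMeasurableSpace E] (φ : E → ℝ) :
    Measurable (fenchelConjugate φ) :=
  (lowerSemicontinuous_iSup fun _ => (continuous_coe_real_ereal.comp
    ((continuous_const.inner continuous_id).sub continuous_const)).lowerSemicontinuous).measurable

variable [CompleteSpace E] {φ : E → ℝ} {p x : E}

theorem ConvexOn.add_inner_le_of_hasGradientAt (hφ : ConvexOn ℝ Set.univ φ)
    (h : HasGradientAt φ p x) (z : E) : φ x + ⟪p, z - x⟫ ≤ φ z := by
  let ℓ : ℝ →ᵃ[ℝ] E := AffineMap.lineMap x z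
  have hline : HasDerivAt (φ ∘ ℓ) ⟪p, z - x⟫ 0 := by
    have hφx : HasFDerivAt φ (InnerProductSpace.toDual ℝ E p) (ℓ 0) := by
      simpa [ℓ] using h.hasFDerivAt
    simpa using hφx.comp_hasDerivAt (0 : ℝ) AffineMap.hasDerivAt_lineMap
  have := (hφ.comp_affineMap ℓ).le_slope_of_hasDerivAt
    (Set.mem_univ 0) (Set.mem_univ 1) one_pos hline
  simp only [slope_def_field, Function.comp_apply, AffineMap.lineMap_apply_one,
    AffineMap.lineMap_apply_zero, sub_zero, div_one, ℓ] at this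
  linarith

theorem HasGradientAt.eq_of_add_inner_le (h : HasGradientAt φ p x) {q : E}
    (hq : ∀ z, φ x + ⟪q, z - x⟫ ≤ φ z) : q = p := by
  have hmin : IsLocalMin (fun y => φ y - ⟪q, y - x⟫) x :=
    Filter.Eventually.of_forall fun z => by simp only [sub_self, inner_zero_right]; linarith [hq z]
  have hlin : HasFDerivAt (fun y => ⟪q, y - x⟫) (InnerProductSpace.toDual ℝ E q) x := by
    simpa [inner_sub_right] using
      ((InnerProductSpace.toDual ℝ E q).hasFDerivAt (x := x)).sub_const ⟪q, x⟫
  have hderiv : HasFDerivAt (fun y => φ y - ⟪q, y - x⟫)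
      (InnerProductSpace.toDual ℝ E (p - q)) x := by
    rw [map_sub]
    exact h.hasFDerivAt.sub hlin
  rw [eq_comm, ← sub_eq_zero, ← (InnerProductSpace.toDual ℝ E).map_eq_zero_iff]
  exact hmin.hasFDerivAt_eq_zero hderiv

theorem ConvexOn.fenchelConjugate_eq_of_hasGradientAt (hφ : ConvexOn ℝ Set.univ φ)
    (h : HasGradientAt φ p x) : fenchelConjugate φ p = ((⟪x, p⟫ - φ x : ℝ) : EReal) :=
  le_antisymm (fenchelConjugate_le_iff.2 (hφ.add_inner_le_of_hasGradientAt h))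
    (le_fenchelConjugate φ x p)

variable [MeasurableSpace E] [OpensMeasurableSpace E]

theorem ae_fenchelConjugate_ne_top_of_map_eq {μ : Measure E} {R S : E → E}
    (hR : Measurable R) (hS : Measurable S) (hmap : μ.map R = μ.map S)
    (hφ : ConvexOn ℝ Set.univ φ) (hRφ : ∀ᵐ x ∂μ, HasGradientAt φ (R x) x) :
    ∀ᵐ x ∂μ, fenchelConjugate φ (S x) ≠ ⊤ :=
  ae_comp_of_map_eq hR.aemeasurable hS.aemeasurable hmap (P := (fenchelConjugate φ · ≠ ⊤))
    (measurable_fenchelConjugate φ (measurableSet_singleton ⊤).compl)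
    (hRφ.mono fun _ hx => hφ.fenchelConjugate_eq_of_hasGradientAt hx ▸ EReal.coe_ne_top _)

theorem ae_eq_of_map_eq_of_hasGradientAt {μ : Measure E} [IsFiniteMeasure μ] {R S : E → E}
    (hR : Measurable R) (hS : Measurable S) (hmap : μ.map R = μ.map S)
    {φ ψ : E → ℝ} (hφ : ConvexOn ℝ Set.univ φ) (hψ : ConvexOn ℝ Set.univ ψ)
    (hRφ : ∀ᵐ x ∂μ, HasGradientAt φ (R x) x) (hSψ : ∀ᵐ x ∂μ, HasGradientAt ψ (S x) x) :
    R =ᵐ[μ] S := by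
  set Φ := fenchelConjugate φ
  set Ψ := fenchelConjugate ψ
  have hΦR : ∀ᵐ x ∂μ, Φ (R x) = ((⟪x, R x⟫ - φ x : ℝ) : EReal) :=
    hRφ.mono fun x hx => hφ.fenchelConjugate_eq_of_hasGradientAt hx
  have hΨS : ∀ᵐ x ∂μ, Ψ (S x) = ((⟪x, S x⟫ - ψ x : ℝ) : EReal) :=
    hSψ.mono fun x hx => hψ.fenchelConjugate_eq_of_hasGradientAt hx
  have hΦS := ae_fenchelConjugate_ne_top_of_map_eq hR hS hmap hφ hRφ
  have hΨR := ae_fenchelConjugate_ne_top_of_map_eq hS hR hmap.symm hψ hSψ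
  let H : E → ℝ := fun y => (Φ y).toReal - (Ψ y).toReal
  have hH : Measurable H :=
    (measurable_fenchelConjugate φ).ereal_toReal.sub (measurable_fenchelConjugate ψ).ereal_toReal
  have hHR : ∀ᵐ x ∂μ, H (R x) ≤ ψ x - φ x := by
    filter_upwards [hΦR, hΨR] with x hΦ hΨ
    simp only [H, hΦ, EReal.toReal_coe]
    linarith [le_toReal_fenchelConjugate hΨ x]
  have hHS : ∀ᵐ x ∂μ, ψ x - φ x ≤ H (S x) := by
    filter_upwards [hΨS, hΦS] with x hΨ hΦ
    simp only [H, hΨ, EReal.toReal_coe]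
    linarith [le_toReal_fenchelConjugate hΦ x]
  have heq : H ∘ S =ᵐ[μ] H ∘ R := by
    refine ae_eq_of_map_eq_of_ae_le (hH.comp hS).aemeasurable (hH.comp hR).aemeasurable
      (by rw [← Measure.map_map hH hS, ← Measure.map_map hH hR, hmap]) ?_
    filter_upwards [hHR, hHS] with x h₁ h₂
    exact h₁.trans h₂
  filter_upwards [hRφ, hΦS, hΨS, hHR, heq] with x hgrad hΦ hΨ hle hx
  refine (hgrad.eq_of_add_inner_le (fenchelConjugate_le_iff.1 ?_)).symm
  refine (EReal.le_coe_toReal hΦ).trans (EReal.coe_le_coe_iff.2 ?_)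
  simp only [Function.comp_apply, H, hΨ, EReal.toReal_coe] at hx hle
  linarith

end ConvexAnalysis

theorem IsRankMap.ae_eq {d : ℕ} {μ : Measure (Euc d)} [IsFiniteMeasure μ] {R S : Euc d → Euc d}
    (hR : IsRankMap μ R) (hS : IsRankMap μ S) : R =ᵐ[μ] S := by
  obtain ⟨hRm, ⟨φ, hφ, hRφ⟩, hRμ⟩ := hR
  obtain ⟨hSm, ⟨ψ, hψ, hSψ⟩, hSμ⟩ := hS
  exact ae_eq_of_map_eq_of_hasGradientAt hRm hSm (hRμ.trans hSμ.symm) hφ hψ hRφ hSψ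

section AffineRescaling

variable {E : Type*} [NormedAddCommGroup E] [InnerProductSpace ℝ E] (a : E) {b : ℝ}

theorem ConvexOn.comp_affine_rescale {φ : E → ℝ} (hφ : ConvexOn ℝ Set.univ φ) (hb : 0 ≤ b) :
    ConvexOn ℝ Set.univ (fun y => b * φ (b⁻¹ • (y - a))) := by
  have := ((hφ.comp_linearMap (b⁻¹ • LinearMap.id)).translate_right (-a)).smul hb
  simpa [sub_eq_neg_add] using this

theorem HasGradientAt.comp_affine_rescale [CompleteSpace E] {φ : E → ℝ} {p z : E}
    (h : HasGradientAt φ p z) (hb : b ≠ 0) :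
    HasGradientAt (fun y => b * φ (b⁻¹ • (y - a))) p (a + b • z) := by
  rw [hasGradientAt_iff_hasFDerivAt] at h ⊢
  have hz : b⁻¹ • (a + b • z - a) = z := by simp [hb]
  have hin : HasFDerivAt (fun y : E => b⁻¹ • (y - a)) (b⁻¹ • ContinuousLinearMap.id ℝ E)
      (a + b • z) := ((hasFDerivAt_id _).sub_const a).const_smul b⁻¹
  have h' : HasFDerivAt φ (InnerProductSpace.toDual ℝ E p) (b⁻¹ • (a + b • z - a)) := by
    rwa [hz]
  have hL : b • (InnerProductSpace.toDual ℝ E p).comp (b⁻¹ • ContinuousLinearMap.id ℝ E) =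
      InnerProductSpace.toDual ℝ E p := by
    ext v
    simp [hb]
  rw [← hL]
  exact (HasFDerivAt.comp (f := fun y : E => b⁻¹ • (y - a)) _ h' hin).const_mul b

variable [MeasurableSpace E] [BorelSpace E] {μ : Measure E}

theorem ae_hasGradientAt_map_affine_rescale [CompleteSpace E] (hb : b ≠ 0) {φ : E → ℝ}
    {R : E → E} (h : ∀ᵐ x ∂μ, HasGradientAt φ (R x) x) :
    ∀ᵐ x ∂μ.map (fun y => a + b • y),
      HasGradientAt (fun y => b * φ (b⁻¹ • (y - a))) (R (b⁻¹ • (x - a))) x := by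
  have hT : MeasurableEmbedding fun y : E => a + b • y :=
    ((Homeomorph.smulOfNeZero b hb).trans (Homeomorph.addLeft a)).measurableEmbedding
  rw [hT.ae_map_iff]
  filter_upwards [h] with y hy
  simpa [hb] using hy.comp_affine_rescale a hb

theorem map_map_affine_rescale {F : Type*} [MeasurableSpace F] {R : E → F} (hR : Measurable R)
    (hb : b ≠ 0) :
    (μ.map (fun y => a + b • y)).map (fun x => R (b⁻¹ • (x - a))) = μ.map R := by
  have hS : Measurable fun x : E => R (b⁻¹ • (x - a)) :=
    hR.comp (by fun_prop : Continuous fun x : E => b⁻¹ • (x - a)).measurable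
  rw [Measure.map_map hS (by fun_prop : Continuous fun y : E => a + b • y).measurable]
  congr 1
  funext y
  simp [hb]

end AffineRescaling

theorem IsRankMap.map_affine_rescale {d : ℕ} {μ : Measure (Euc d)} {R : Euc d → Euc d}
    (hR : IsRankMap μ R) (a : Euc d) {b : ℝ} (hb : 0 < b) :
    IsRankMap (μ.map fun y => a + b • y) (fun x => R (b⁻¹ • (x - a))) := by
  obtain ⟨hRm, ⟨φ, hφ, hRφ⟩, hRμ⟩ := hR
  refine ⟨hRm.comp (by fun_prop : Continuous fun x : Euc d => b⁻¹ • (x - a)).measurable,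
    ⟨_, hφ.comp_affine_rescale a hb.le, ae_hasGradientAt_map_affine_rescale a hb.ne' hRφ⟩, ?_⟩
  rw [map_map_affine_rescale a hRm hb.ne', hRμ]

section RdCovSq

variable {d₁ d₂ : ℕ}

theorem RdCovSq_eq_map_prodMap (ν : Measure (Euc d₁ × Euc d₂)) [SFinite ν]
    {R₁ : Euc d₁ → Euc d₁} {R₂ : Euc d₂ → Euc d₂} (hR₁ : Measurable R₁) (hR₂ : Measurable R₂) :
    RdCovSq ν R₁ R₂ = RdCovSq (ν.map (Prod.map R₁ R₂)) id id := by
  have hR := hR₁.prodMap hR₂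
  have h₂ := Measure.map_prod_map ν ν hR hR
  have h₃ := Measure.map_prod_map ν (ν.prod ν) hR (hR.prodMap hR)
  simp only [RdCovSq, h₂, h₃]
  rw [integral_map, integral_map, integral_map, integral_map] <;> first | rfl | fun_prop

theorem RdCovSq_congr_ae (ν : Measure (Euc d₁ × Euc d₂)) [SFinite ν]
    {R₁ S₁ : Euc d₁ → Euc d₁} {R₂ S₂ : Euc d₂ → Euc d₂} (hR₁ : Measurable R₁)
    (hS₁ : Measurable S₁) (hR₂ : Measurable R₂) (hS₂ : Measurable S₂)
    (h₁ : R₁ =ᵐ[ν.map Prod.fst] S₁) (h₂ : R₂ =ᵐ[ν.map Prod.snd] S₂) :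
    RdCovSq ν R₁ R₂ = RdCovSq ν S₁ S₂ := by
  rw [RdCovSq_eq_map_prodMap ν hR₁ hR₂, RdCovSq_eq_map_prodMap ν hS₁ hS₂, Measure.map_congr]
  filter_upwards [ae_of_ae_map measurable_fst.aemeasurable h₁,
    ae_of_ae_map measurable_snd.aemeasurable h₂] with p hp₁ hp₂
  exact Prod.ext hp₁ hp₂

theorem RdCovSq_map_prodMap (ν : Measure (Euc d₁ × Euc d₂)) [SFinite ν]
    {T₁ S₁ : Euc d₁ → Euc d₁} {T₂ S₂ : Euc d₂ → Euc d₂} (hT₁ : Measurable T₁)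
    (hS₁ : Measurable S₁) (hT₂ : Measurable T₂) (hS₂ : Measurable S₂) :
    RdCovSq (ν.map (Prod.map T₁ T₂)) S₁ S₂ = RdCovSq ν (S₁ ∘ T₁) (S₂ ∘ T₂) := by
  rw [RdCovSq_eq_map_prodMap _ hS₁ hS₂, RdCovSq_eq_map_prodMap _ (hS₁.comp hT₁) (hS₂.comp hT₂),
    Measure.map_map (hS₁.prodMap hS₂) (hT₁.prodMap hT₂)]
  rfl

theorem RdCovSq_map_affine_rescale (ν : Measure (Euc d₁ × Euc d₂)) [IsFiniteMeasure ν]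
    {R₁ R₁' : Euc d₁ → Euc d₁} {R₂ R₂' : Euc d₂ → Euc d₂}
    (hR₁ : IsRankMap (ν.map Prod.fst) R₁) (hR₂ : IsRankMap (ν.map Prod.snd) R₂)
    (a₁ : Euc d₁) (a₂ : Euc d₂) {b₁ b₂ : ℝ} (hb₁ : 0 < b₁) (hb₂ : 0 < b₂)
    (hR₁' : IsRankMap ((ν.map Prod.fst).map fun y => a₁ + b₁ • y) R₁')
    (hR₂' : IsRankMap ((ν.map Prod.snd).map fun y => a₂ + b₂ • y) R₂') :
    RdCovSq (ν.map (Prod.map (fun y => a₁ + b₁ • y) (fun y => a₂ + b₂ • y))) R₁' R₂' =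
      RdCovSq ν R₁ R₂ := by
  have hT₁ : Measurable fun y : Euc d₁ => a₁ + b₁ • y := by fun_prop
  have hT₂ : Measurable fun y : Euc d₂ => a₂ + b₂ • y := by fun_prop
  set T := Prod.map (fun y : Euc d₁ => a₁ + b₁ • y) (fun y : Euc d₂ => a₂ + b₂ • y)
  have hS₁ := hR₁.map_affine_rescale a₁ hb₁
  have hS₂ := hR₂.map_affine_rescale a₂ hb₂
  have hfst : (ν.map T).map Prod.fst = (ν.map Prod.fst).map fun y => a₁ + b₁ • y := by
    rw [Measure.map_map measurable_fst (hT₁.prodMap hT₂), Measure.map_map hT₁ measurable_fst]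
    rfl
  have hsnd : (ν.map T).map Prod.snd = (ν.map Prod.snd).map fun y => a₂ + b₂ • y := by
    rw [Measure.map_map measurable_snd (hT₁.prodMap hT₂), Measure.map_map hT₂ measurable_snd]
    rfl
  rw [RdCovSq_congr_ae _ hR₁'.1 hS₁.1 hR₂'.1 hS₂.1 (hfst ▸ hR₁'.ae_eq hS₁)
    (hsnd ▸ hR₂'.ae_eq hS₂), RdCovSq_map_prodMap _ hT₁ hS₁.1 hT₂ hS₂.1]
  congr 1 <;> funext y <;> simp [hb₁.ne', hb₂.ne']

end RdCovSq

theorem stmt6_general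
    {d : ℕ} (μ : Measure (Euc d))
    (R : Euc d → Euc d) (hRmeas : Measurable R)
    (φ : Euc d → ℝ) (hφ : ConvexOn ℝ Set.univ φ)
    (hgrad : ∀ᵐ x ∂μ, HasGradientAt φ (R x) x)
    (hpush : Measure.map R μ = unifCube d)
    (a : Euc d) (b : ℝ) (hb : 0 < b) :
    (ConvexOn ℝ Set.univ (fun y => b * φ (b⁻¹ • (y - a))) ∧
      (∀ᵐ x ∂ Measure.map (fun y => a + b • y) μ,
        HasGradientAt (fun y => b * φ (b⁻¹ • (y - a))) (R (b⁻¹ • (x - a))) x) ∧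
      Measure.map (fun x => R (b⁻¹ • (x - a))) (Measure.map (fun y => a + b • y) μ)
        = unifCube d) ∧
    (∀ (d₁ d₂ : ℕ) (Ω : Type) [MeasurableSpace Ω] (P : Measure Ω),
      IsProbabilityMeasure P →
      ∀ (Z₁ : Ω → Euc d₁) (Z₂ : Ω → Euc d₂), Measurable Z₁ → Measurable Z₂ →
      Measure.map Z₁ P ≪ volume → Measure.map Z₂ P ≪ volume →
      ∀ (a₁ : Euc d₁) (a₂ : Euc d₂) (b₁ b₂ : ℝ), 0 < b₁ → 0 < b₂ →
      ∀ (R₁ : Euc d₁ → Euc d₁) (R₂ : Euc d₂ → Euc d₂),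
        IsRankMap (Measure.map Z₁ P) R₁ → IsRankMap (Measure.map Z₂ P) R₂ →
      ∀ (R₁' : Euc d₁ → Euc d₁) (R₂' : Euc d₂ → Euc d₂),
        IsRankMap (Measure.map (fun ω => a₁ + b₁ • Z₁ ω) P) R₁' →
        IsRankMap (Measure.map (fun ω => a₂ + b₂ • Z₂ ω) P) R₂' →
        RdCovSq (Measure.map (fun ω => (a₁ + b₁ • Z₁ ω, a₂ + b₂ • Z₂ ω)) P) R₁' R₂'
          = RdCovSq (Measure.map (fun ω => (Z₁ ω, Z₂ ω)) P) R₁ R₂) := by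
  refine ⟨⟨hφ.comp_affine_rescale a hb.le, ae_hasGradientAt_map_affine_rescale a hb.ne' hgrad,
    by rw [map_map_affine_rescale a hRmeas hb.ne', hpush]⟩, ?_⟩
  intro d₁ d₂ Ω _ P _ Z₁ Z₂ hZ₁ hZ₂ _ _ a₁ a₂ b₁ b₂ hb₁ hb₂ R₁ R₂ hR₁ hR₂ R₁' R₂' hR₁' hR₂'
  set ν := P.map fun ω => (Z₁ ω, Z₂ ω)
  have hZ : Measurable fun ω => (Z₁ ω, Z₂ ω) := hZ₁.prodMk hZ₂
  have hfst : ν.map Prod.fst = P.map Z₁ := Measure.map_map measurable_fst hZ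
  have hsnd : ν.map Prod.snd = P.map Z₂ := Measure.map_map measurable_snd hZ
  have h₁ : P.map (fun ω => a₁ + b₁ • Z₁ ω) = (ν.map Prod.fst).map fun y => a₁ + b₁ • y := by
    rw [hfst, Measure.map_map (by fun_prop) hZ₁]
    rfl
  have h₂ : P.map (fun ω => a₂ + b₂ • Z₂ ω) = (ν.map Prod.snd).map fun y => a₂ + b₂ • y := by
    rw [hsnd, Measure.map_map (by fun_prop) hZ₂]
    rfl
  have hjoint : P.map (fun ω => (a₁ + b₁ • Z₁ ω, a₂ + b₂ • Z₂ ω)) =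
      ν.map (Prod.map (fun y => a₁ + b₁ • y) (fun y => a₂ + b₂ • y)) :=
    (Measure.map_map (g := Prod.map (fun y => a₁ + b₁ • y) (fun y => a₂ + b₂ • y))
      (by fun_prop) hZ).symm
  rw [hjoint]
  exact RdCovSq_map_affine_rescale ν (hfst ▸ hR₁) (hsnd ▸ hR₂) a₁ a₂ hb₁ hb₂ (h₁ ▸ hR₁')
    (h₂ ▸ hR₂')

/-- Equivariance of rank maps under positive scalings and translations, and the resulting
invariance of the rank distance covariance: if `R = ∇φ` `μ`-a.e. is a rank map of `μ`, then
`x ↦ R((x−a)/b)` is a rank map of the pushforward of `μ` under `x ↦ a + b x` (with convex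
potential `x ↦ b·φ((x−a)/b)`); consequently `RdCov²` is invariant under such transformations
of each coordinate, computed with any rank maps of the transformed marginals. -/
theorem stmt6
    {d : ℕ} (μ : Measure (Euc d)) [IsProbabilityMeasure μ] (hac : μ ≪ volume)
    (R : Euc d → Euc d) (hRmeas : Measurable R)
    (φ : Euc d → ℝ) (hφ : ConvexOn ℝ Set.univ φ)
    (hgrad : ∀ᵐ x ∂μ, HasGradientAt φ (R x) x)
    (hpush : Measure.map R μ = unifCube d)
    (a : Euc d) (b : ℝ) (hb : 0 < b) :
    (ConvexOn ℝ Set.univ (fun y => b * φ (b⁻¹ • (y - a))) ∧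
      (∀ᵐ x ∂ Measure.map (fun y => a + b • y) μ,
        HasGradientAt (fun y => b * φ (b⁻¹ • (y - a))) (R (b⁻¹ • (x - a))) x) ∧
      Measure.map (fun x => R (b⁻¹ • (x - a))) (Measure.map (fun y => a + b • y) μ)
        = unifCube d) ∧
    (∀ (d₁ d₂ : ℕ) (Ω : Type) [MeasurableSpace Ω] (P : Measure Ω),
      IsProbabilityMeasure P →
      ∀ (Z₁ : Ω → Euc d₁) (Z₂ : Ω → Euc d₂), Measurable Z₁ → Measurable Z₂ →
      Measure.map Z₁ P ≪ volume → Measure.map Z₂ P ≪ volume →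
      ∀ (a₁ : Euc d₁) (a₂ : Euc d₂) (b₁ b₂ : ℝ), 0 < b₁ → 0 < b₂ →
      ∀ (R₁ : Euc d₁ → Euc d₁) (R₂ : Euc d₂ → Euc d₂),
        IsRankMap (Measure.map Z₁ P) R₁ → IsRankMap (Measure.map Z₂ P) R₂ →
      ∀ (R₁' : Euc d₁ → Euc d₁) (R₂' : Euc d₂ → Euc d₂),
        IsRankMap (Measure.map (fun ω => a₁ + b₁ • Z₁ ω) P) R₁' →
        IsRankMap (Measure.map (fun ω => a₂ + b₂ • Z₂ ω) P) R₂' →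
        RdCovSq (Measure.map (fun ω => (a₁ + b₁ • Z₁ ω, a₂ + b₂ • Z₂ ω)) P) R₁' R₂'
          = RdCovSq (Measure.map (fun ω => (Z₁ ω, Z₂ ω)) P) R₁ R₂) :=
  stmt6_general μ R hRmeas φ hφ hgrad hpush a b hb
end
end

section
/- Let (X, Y) be a random vector in ℝ² whose marginal distribution functions F and G are absolutely continuous, with joint distribution function F^{X,Y}, and let (X_1,Y_1), (X_2,Y_2), (X_3,Y_3) be i.i.d. copies of (X,Y). Then E[|F(X_1)−F(X_2)|·|G(Y_1)−G(Y_2)|] + E|F(X_1)−F(X_2)| · E|G(Y_1)−G(Y_2)| − 2·E[|F(X_1)−F(X_2)|·|G(Y_1)−G(Y_3)|] = 4 ∫∫ (F^{X,Y}(x,y) − F(x)G(y))² dF(x) dG(y), where the integral on the right is taken with respect to the product of the marginal laws of X and Y. In other words, one quarter of the population rank distance covariance of (X,Y) equals the modified Hoeffding functional ∫ (F^{X,Y} − F G)² dF dG. -/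
/-!
For a law `μ` on `ℝ` with distribution function `F`,
`|F s - F t| = ∫ |1{x ≤ s} - 1{x ≤ t}| dμ(x)`. Substituting this into the three terms and
using Fubini, the left-hand side becomes the `μ_X ⊗ μ_Y`-integral over `(x, y)` of the same
combination of expectations, now for the pair of indicators `A = 1{X ≥ x}`, `B = 1{Y ≥ y}`.
For indicators `|a - a'| = a + a' - 2 a a'`, so every expectation is a polynomial in
`p = P(A)`, `q = P(B)`, `r = P(A ∧ B)`, and the combination collapses to `4 (r - p q)²`.
As the marginals have no atoms, `p = 1 - F x`, `q = 1 - G y` and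
`r = 1 - F x - G y + F^{X,Y}(x, y)`, whence `r - p q = F^{X,Y}(x, y) - F x * G y`.
-/

open MeasureTheory ProbabilityTheory Set

lemma abs_indicator_one_sub {α : Type*} (S : Set α) (z w : α) :
    |(S.indicator 1 z : ℝ) - S.indicator 1 w|
      = S.indicator 1 z + S.indicator 1 w - 2 * (S.indicator 1 z * S.indicator 1 w) := by
  by_cases hz : z ∈ S <;> by_cases hw : w ∈ S <;> norm_num [hz, hw]

lemma abs_abs_indicator_one_sub_le_one {α : Type*} (S : Set α) (z w : α) :
    |(|(S.indicator 1 z : ℝ) - S.indicator 1 w|)| ≤ 1 := by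
  by_cases hz : z ∈ S <;> by_cases hw : w ∈ S <;> norm_num [hz, hw]

lemma abs_abs_indicator_one_sub_mul_le_one {α β : Type*} (S : Set α) (T : Set β) (z w : α)
    (z' w' : β) :
    |(|(S.indicator 1 z : ℝ) - S.indicator 1 w| * |(T.indicator 1 z' : ℝ) - T.indicator 1 w'|)|
      ≤ 1 := by
  rw [abs_mul]
  exact mul_le_one₀ (abs_abs_indicator_one_sub_le_one S z w) (abs_nonneg _)
    (abs_abs_indicator_one_sub_le_one T z' w')

lemma integrable_of_abs_le_one {β : Type*} [MeasurableSpace β] {ρ : Measure β}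
    [IsFiniteMeasure ρ] {f : β → ℝ} (hf : Measurable f) (h : ∀ b, |f b| ≤ 1) :
    Integrable f ρ :=
  .of_bound hf.aestronglyMeasurable 1 (ae_of_all _ h)

lemma integrable_indicator_one {α : Type*} [MeasurableSpace α] {ν : Measure α}
    [IsFiniteMeasure ν] {S : Set α} (hS : MeasurableSet S) :
    Integrable (S.indicator (1 : α → ℝ)) ν :=
  (integrable_const 1).indicator hS

section Fubini

variable {β γ : Type*} [MeasurableSpace β] [MeasurableSpace γ] {ρ : Measure β} {μ : Measure γ}
  [IsFiniteMeasure ρ] [IsFiniteMeasure μ] {f : γ → β → ℝ}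

lemma integral_integral_swap_of_abs_le_one (hf : Measurable (Function.uncurry f))
    (h1 : ∀ z b, |f z b| ≤ 1) : ∫ b, ∫ z, f z b ∂μ ∂ρ = ∫ z, ∫ b, f z b ∂ρ ∂μ :=
  (integral_integral_swap (integrable_of_abs_le_one hf fun p => h1 p.1 p.2)).symm

lemma integrable_integral_of_abs_le_one (hf : Measurable (Function.uncurry f))
    (h1 : ∀ z b, |f z b| ≤ 1) : Integrable (fun z => ∫ b, f z b ∂ρ) μ :=
  (integrable_of_abs_le_one hf fun p => h1 p.1 p.2).integral_prod_left

end Fubini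

section Indicator

variable {α : Type*} [MeasurableSpace α] {ν : Measure α} [IsProbabilityMeasure ν] {S T : Set α}

lemma integral_const_add_mul_indicator_one (hS : MeasurableSet S) (c₀ c₁ : ℝ) :
    ∫ z, (c₀ + c₁ * S.indicator 1 z) ∂ν = c₀ + c₁ * ν.real S := by
  rw [integral_add (integrable_const _) ((integrable_indicator_one hS).const_mul c₁),
    integral_const_mul, integral_indicator_one hS]
  simp

lemma integral_indicator_one_bilinear (hS : MeasurableSet S) (hT : MeasurableSet T)
    (c₀ c₁ c₂ c₃ : ℝ) :
    ∫ z, (c₀ + c₁ * S.indicator 1 z + c₂ * T.indicator 1 z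
        + c₃ * (S.indicator 1 z * T.indicator 1 z)) ∂ν
      = c₀ + c₁ * ν.real S + c₂ * ν.real T + c₃ * ν.real (S ∩ T) := by
  have hST : ∀ z, (S.indicator 1 z * T.indicator 1 z : ℝ) = (S ∩ T).indicator 1 z := by
    simp [inter_indicator_one]
  simp_rw [hST]
  have hc : Integrable (fun z => c₀ + c₁ * S.indicator (1 : α → ℝ) z) ν :=
    (integrable_const _).add ((integrable_indicator_one hS).const_mul _)
  have hc' : Integrable (fun z => c₀ + c₁ * S.indicator 1 z + c₂ * T.indicator (1 : α → ℝ) z) ν :=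
    hc.add ((integrable_indicator_one hT).const_mul _)
  rw [integral_add hc' ((integrable_indicator_one (hS.inter hT)).const_mul _),
    integral_add hc ((integrable_indicator_one hT).const_mul _),
    integral_const_add_mul_indicator_one hS, integral_const_mul, integral_const_mul,
    integral_indicator_one hT, integral_indicator_one (hS.inter hT)]

lemma integral_abs_indicator_one_sub (hS : MeasurableSet S) (z : α) :
    ∫ w, |(S.indicator 1 z : ℝ) - S.indicator 1 w| ∂ν
      = S.indicator 1 z + ν.real S - 2 * ν.real S * S.indicator 1 z := by
  have key : ∀ w, |(S.indicator 1 z : ℝ) - S.indicator 1 w|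
      = S.indicator 1 z + (1 - 2 * S.indicator 1 z) * S.indicator 1 w := fun w => by
    rw [abs_indicator_one_sub]; ring
  simp_rw [key, integral_const_add_mul_indicator_one hS]
  ring

lemma integral_prod_abs_indicator_one_sub (hS : MeasurableSet S) :
    ∫ q, |(S.indicator 1 q.1 : ℝ) - S.indicator 1 q.2| ∂ν.prod ν
      = 2 * ν.real S * (1 - ν.real S) := by
  have hint : Integrable (fun q : α × α => |(S.indicator 1 q.1 : ℝ) - S.indicator 1 q.2|)
      (ν.prod ν) :=
    integrable_of_abs_le_one (by fun_prop (disch := assumption))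
      fun q => abs_abs_indicator_one_sub_le_one S q.1 q.2
  calc _ = ∫ z, ∫ w, |(S.indicator 1 z : ℝ) - S.indicator 1 w| ∂ν ∂ν := integral_prod _ hint
    _ = ∫ z, (ν.real S + (1 - 2 * ν.real S) * S.indicator 1 z) ∂ν := by
      congr 1; funext z; rw [integral_abs_indicator_one_sub hS]; ring
    _ = _ := by rw [integral_const_add_mul_indicator_one hS]; ring

lemma integral_prod_abs_indicator_one_sub_mul (hS : MeasurableSet S) (hT : MeasurableSet T) :
    ∫ q, |(S.indicator 1 q.1 : ℝ) - S.indicator 1 q.2|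
        * |(T.indicator 1 q.1 : ℝ) - T.indicator 1 q.2| ∂ν.prod ν
      = ν.real (S ∩ T) + (ν.real T - 2 * ν.real (S ∩ T)) * ν.real S
        + (ν.real S - 2 * ν.real (S ∩ T)) * ν.real T
        + (1 - 2 * ν.real S - 2 * ν.real T + 4 * ν.real (S ∩ T)) * ν.real (S ∩ T) := by
  have hint : Integrable (fun q : α × α => |(S.indicator 1 q.1 : ℝ) - S.indicator 1 q.2|
      * |(T.indicator 1 q.1 : ℝ) - T.indicator 1 q.2|) (ν.prod ν) :=
    integrable_of_abs_le_one (by fun_prop (disch := assumption)) fun q =>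
      abs_abs_indicator_one_sub_mul_le_one S T q.1 q.2 q.1 q.2
  have key : ∀ z w, |(S.indicator 1 z : ℝ) - S.indicator 1 w|
        * |(T.indicator 1 z : ℝ) - T.indicator 1 w|
      = S.indicator 1 z * T.indicator 1 z
        + T.indicator 1 z * (1 - 2 * S.indicator 1 z) * S.indicator 1 w
        + S.indicator 1 z * (1 - 2 * T.indicator 1 z) * T.indicator 1 w
        + (1 - 2 * S.indicator 1 z) * (1 - 2 * T.indicator 1 z)
          * (S.indicator 1 w * T.indicator 1 w) := fun z w => by
    rw [abs_indicator_one_sub, abs_indicator_one_sub]; ring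
  calc _ = ∫ z, ∫ w, |(S.indicator 1 z : ℝ) - S.indicator 1 w|
        * |(T.indicator 1 z : ℝ) - T.indicator 1 w| ∂ν ∂ν := integral_prod _ hint
    _ = ∫ z, (ν.real (S ∩ T) + (ν.real T - 2 * ν.real (S ∩ T)) * S.indicator 1 z
          + (ν.real S - 2 * ν.real (S ∩ T)) * T.indicator 1 z
          + (1 - 2 * ν.real S - 2 * ν.real T + 4 * ν.real (S ∩ T))
            * (S.indicator 1 z * T.indicator 1 z)) ∂ν := by
      congr 1; funext z
      simp_rw [key z, integral_indicator_one_bilinear hS hT]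
      ring
    _ = _ := integral_indicator_one_bilinear hS hT _ _ _ _

lemma integral_prod_prod_abs_indicator_one_sub_mul (hS : MeasurableSet S)
    (hT : MeasurableSet T) :
    ∫ q, |(S.indicator 1 q.1 : ℝ) - S.indicator 1 q.2.1|
        * |(T.indicator 1 q.1 : ℝ) - T.indicator 1 q.2.2| ∂ν.prod (ν.prod ν)
      = ν.real S * ν.real T + (1 - 2 * ν.real S) * ν.real T * ν.real S
        + ν.real S * (1 - 2 * ν.real T) * ν.real T
        + (1 - 2 * ν.real S) * (1 - 2 * ν.real T) * ν.real (S ∩ T) := by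
  have hint : Integrable (fun q : α × α × α => |(S.indicator 1 q.1 : ℝ) - S.indicator 1 q.2.1|
      * |(T.indicator 1 q.1 : ℝ) - T.indicator 1 q.2.2|) (ν.prod (ν.prod ν)) :=
    integrable_of_abs_le_one (by fun_prop (disch := assumption)) fun q =>
      abs_abs_indicator_one_sub_mul_le_one S T q.1 q.2.1 q.1 q.2.2
  calc _ = ∫ z, ∫ w, |(S.indicator 1 z : ℝ) - S.indicator 1 w.1|
        * |(T.indicator 1 z : ℝ) - T.indicator 1 w.2| ∂ν.prod ν ∂ν := integral_prod _ hint
    _ = ∫ z, (S.indicator 1 z + ν.real S - 2 * ν.real S * S.indicator 1 z)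
          * (T.indicator 1 z + ν.real T - 2 * ν.real T * T.indicator 1 z) ∂ν := by
      congr 1; funext z
      rw [integral_prod_mul (fun w => |(S.indicator 1 z : ℝ) - S.indicator 1 w|)
        (fun w => |(T.indicator 1 z : ℝ) - T.indicator 1 w|),
        integral_abs_indicator_one_sub hS, integral_abs_indicator_one_sub hT]
    _ = ∫ z, (ν.real S * ν.real T + (1 - 2 * ν.real S) * ν.real T * S.indicator 1 z
          + ν.real S * (1 - 2 * ν.real T) * T.indicator 1 z
          + (1 - 2 * ν.real S) * (1 - 2 * ν.real T) * (S.indicator 1 z * T.indicator 1 z)) ∂ν := by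
      congr 1; funext z; ring
    _ = _ := integral_indicator_one_bilinear hS hT _ _ _ _

lemma dcov_indicator_one_eq (hS : MeasurableSet S) (hT : MeasurableSet T) :
    (∫ q, |(S.indicator 1 q.1 : ℝ) - S.indicator 1 q.2|
        * |(T.indicator 1 q.1 : ℝ) - T.indicator 1 q.2| ∂ν.prod ν)
      + (∫ q, |(S.indicator 1 q.1 : ℝ) - S.indicator 1 q.2| ∂ν.prod ν)
        * (∫ q, |(T.indicator 1 q.1 : ℝ) - T.indicator 1 q.2| ∂ν.prod ν)
      - 2 * ∫ q, |(S.indicator 1 q.1 : ℝ) - S.indicator 1 q.2.1|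
        * |(T.indicator 1 q.1 : ℝ) - T.indicator 1 q.2.2| ∂ν.prod (ν.prod ν)
      = 4 * (ν.real (S ∩ T) - ν.real S * ν.real T) ^ 2 := by
  rw [integral_prod_abs_indicator_one_sub_mul hS hT, integral_prod_abs_indicator_one_sub hS,
    integral_prod_abs_indicator_one_sub hT, integral_prod_prod_abs_indicator_one_sub_mul hS hT]
  ring

end Indicator

lemma abs_indicator_Ici_sub_of_le {s t : ℝ} (h : s ≤ t) (x : ℝ) :
    |(Ici x).indicator (1 : ℝ → ℝ) s - (Ici x).indicator 1 t| = (Ioc s t).indicator 1 x := by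
  by_cases hs : x ≤ s
  · simp [hs, hs.trans h]
  · by_cases ht : x ≤ t <;> simp [hs, ht, lt_of_not_ge hs]

lemma abs_cdf_sub_cdf (μ : Measure ℝ) [IsProbabilityMeasure μ] (s t : ℝ) :
    |cdf μ s - cdf μ t| = ∫ x, |(Ici x).indicator (1 : ℝ → ℝ) s - (Ici x).indicator 1 t| ∂μ := by
  wlog h : s ≤ t generalizing s t
  · simp_rw [abs_sub_comm _ (cdf μ t), this t s (le_of_not_ge h), abs_sub_comm]
  rw [integral_congr_ae (ae_of_all _ (abs_indicator_Ici_sub_of_le h)),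
    integral_indicator_one measurableSet_Ioc, ← Iic_sdiff_Iic,
    measureReal_sdiff (μ := μ) (Iic_subset_Iic.2 h) measurableSet_Iic, ← cdf_eq_real,
    ← cdf_eq_real, abs_sub_comm, abs_of_nonneg (sub_nonneg.2 (monotone_cdf μ h))]

lemma measureReal_Ici_eq_one_sub_cdf (μ : Measure ℝ) [IsProbabilityMeasure μ]
    [NullSingletonClass μ] (x : ℝ) : μ.real (Ici x) = 1 - cdf μ x := by
  rw [← measureReal_congr Ioi_ae_eq_Ici, ← compl_Iic, measureReal_compl measurableSet_Iic,
    probReal_univ, cdf_eq_real]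

lemma measureReal_Ici_prod_Ici {ν : Measure (ℝ × ℝ)} [IsProbabilityMeasure ν] {μ μ' : Measure ℝ}
    [IsProbabilityMeasure μ] [IsProbabilityMeasure μ'] [NullSingletonClass μ]
    [NullSingletonClass μ']
    (hμ : ν.map Prod.fst = μ) (hμ' : ν.map Prod.snd = μ') (x y : ℝ) :
    ν.real (Ici x ×ˢ Ici y) = 1 - cdf μ x - cdf μ' y + ν.real (Iic x ×ˢ Iic y) := by
  have hx : Prod.fst ⁻¹' Ici x =ᵐ[ν] Prod.fst ⁻¹' Ioi x :=
    (measurable_fst.quasiMeasurePreserving ν).preimage_ae_eq (hμ ▸ Ioi_ae_eq_Ici.symm)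
  have hy : Prod.snd ⁻¹' Ici y =ᵐ[ν] Prod.snd ⁻¹' Ioi y :=
    (measurable_snd.quasiMeasurePreserving ν).preimage_ae_eq (hμ' ▸ Ioi_ae_eq_Ici.symm)
  have hunion := measureReal_union_add_inter (μ := ν) (s := Prod.fst ⁻¹' Iic x)
    (t := Prod.snd ⁻¹' Iic y) (measurable_snd measurableSet_Iic)
  rw [← Set.prod_eq] at hunion
  rw [Set.prod_eq, measureReal_congr (hx.inter hy), ← compl_Iic, ← compl_Iic, preimage_compl,
    preimage_compl, ← compl_union,
    measureReal_compl ((measurable_fst measurableSet_Iic).union (measurable_snd measurableSet_Iic)),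
    probReal_univ, cdf_eq_real, cdf_eq_real, ← hμ, ← hμ',
    map_measureReal_apply measurable_fst measurableSet_Iic,
    map_measureReal_apply measurable_snd measurableSet_Iic]
  linarith

@[fun_prop]
lemma Measurable.indicator_Ici_one {β : Type*} [MeasurableSpace β] {f g : β → ℝ}
    (hf : Measurable f) (hg : Measurable g) :
    Measurable fun b => (Ici (f b)).indicator (1 : ℝ → ℝ) (g b) := by
  simp only [indicator_apply, mem_Ici, Pi.one_apply]
  exact Measurable.ite (measurableSet_le hf hg) measurable_const measurable_const

lemma integral_abs_cdf_sub_mul_abs_cdf_sub {β : Type*} [MeasurableSpace β] {ρ : Measure β}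
    [IsFiniteMeasure ρ] (μ μ' : Measure ℝ) [IsProbabilityMeasure μ] [IsProbabilityMeasure μ']
    {s t u v : β → ℝ} (hs : Measurable s) (ht : Measurable t) (hu : Measurable u)
    (hv : Measurable v) :
    ∫ b, |cdf μ (s b) - cdf μ (t b)| * |cdf μ' (u b) - cdf μ' (v b)| ∂ρ
      = ∫ z : ℝ × ℝ, ∫ b,
          |(Ici z.1).indicator (1 : ℝ → ℝ) (s b) - (Ici z.1).indicator 1 (t b)|
          * |(Ici z.2).indicator (1 : ℝ → ℝ) (u b) - (Ici z.2).indicator 1 (v b)| ∂ρ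
        ∂μ.prod μ' := by
  simp_rw [abs_cdf_sub_cdf μ, abs_cdf_sub_cdf μ', ← integral_prod_mul]
  exact integral_integral_swap_of_abs_le_one (by fun_prop) fun _ _ =>
    abs_abs_indicator_one_sub_mul_le_one _ _ _ _ _ _

lemma dcov_indicator_Ici_eq_sq {ν : Measure (ℝ × ℝ)} [IsProbabilityMeasure ν]
    {μ μ' : Measure ℝ} [IsProbabilityMeasure μ] [IsProbabilityMeasure μ'] [NullSingletonClass μ]
    [NullSingletonClass μ'] (hμ : ν.map Prod.fst = μ) (hμ' : ν.map Prod.snd = μ') (x y : ℝ) :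
    (∫ b, |(Ici x).indicator (1 : ℝ → ℝ) b.1.1 - (Ici x).indicator 1 b.2.1|
        * |(Ici y).indicator (1 : ℝ → ℝ) b.1.2 - (Ici y).indicator 1 b.2.2| ∂ν.prod ν)
      + (∫ b, |(Ici x).indicator (1 : ℝ → ℝ) b.1.1 - (Ici x).indicator 1 b.1.2|
        * |(Ici y).indicator (1 : ℝ → ℝ) b.2.1 - (Ici y).indicator 1 b.2.2|
          ∂(μ.prod μ).prod (μ'.prod μ'))
      - 2 * ∫ b, |(Ici x).indicator (1 : ℝ → ℝ) b.1.1 - (Ici x).indicator 1 b.2.1.1|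
        * |(Ici y).indicator (1 : ℝ → ℝ) b.1.2 - (Ici y).indicator 1 b.2.2.2| ∂ν.prod (ν.prod ν)
      = 4 * (ν.real (Iic x ×ˢ Iic y) - cdf μ x * cdf μ' y) ^ 2 := by
  have hS : MeasurableSet (Prod.fst ⁻¹' Ici x : Set (ℝ × ℝ)) := measurable_fst measurableSet_Ici
  have hT : MeasurableSet (Prod.snd ⁻¹' Ici y : Set (ℝ × ℝ)) := measurable_snd measurableSet_Ici
  have key := dcov_indicator_one_eq (ν := ν) hS hT
  rw [integral_prod_abs_indicator_one_sub hS, integral_prod_abs_indicator_one_sub hT,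
    ← Set.prod_eq, measureReal_Ici_prod_Ici hμ hμ', ← map_measureReal_apply measurable_fst
    measurableSet_Ici, ← map_measureReal_apply measurable_snd measurableSet_Ici, hμ, hμ',
    measureReal_Ici_eq_one_sub_cdf, measureReal_Ici_eq_one_sub_cdf] at key
  rw [integral_prod_mul
      (fun q : ℝ × ℝ => |(Ici x).indicator (1 : ℝ → ℝ) q.1 - (Ici x).indicator 1 q.2|)
      (fun q : ℝ × ℝ => |(Ici y).indicator (1 : ℝ → ℝ) q.1 - (Ici y).indicator 1 q.2|),
    integral_prod_abs_indicator_one_sub measurableSet_Ici,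
    integral_prod_abs_indicator_one_sub measurableSet_Ici,
    measureReal_Ici_eq_one_sub_cdf, measureReal_Ici_eq_one_sub_cdf]
  -- `(Prod.fst ⁻¹' Ici x).indicator 1 b.1` in `key` unfolds to `(Ici x).indicator 1 b.1.1`.
  exact key.trans (by ring)

theorem rankDCov_eq_four_mul_integral_sq {ν : Measure (ℝ × ℝ)} [IsProbabilityMeasure ν]
    {μ μ' : Measure ℝ} [NullSingletonClass μ] [NullSingletonClass μ']
    (hμ : ν.map Prod.fst = μ) (hμ' : ν.map Prod.snd = μ') :
    (∫ p, |cdf μ p.1.1 - cdf μ p.2.1| * |cdf μ' p.1.2 - cdf μ' p.2.2| ∂ν.prod ν)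
      + (∫ q, |cdf μ q.1 - cdf μ q.2| ∂μ.prod μ) * (∫ q, |cdf μ' q.1 - cdf μ' q.2| ∂μ'.prod μ')
      - 2 * ∫ p, |cdf μ p.1.1 - cdf μ p.2.1.1| * |cdf μ' p.1.2 - cdf μ' p.2.2.2| ∂ν.prod (ν.prod ν)
    = 4 * ∫ q, (ν.real (Iic q.1 ×ˢ Iic q.2) - cdf μ q.1 * cdf μ' q.2) ^ 2 ∂μ.prod μ' := by
  have : IsProbabilityMeasure μ :=
    hμ ▸ Measure.isProbabilityMeasure_map measurable_fst.aemeasurable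
  have : IsProbabilityMeasure μ' :=
    hμ' ▸ Measure.isProbabilityMeasure_map measurable_snd.aemeasurable
  -- Merging the two marginal terms into one integral lets all three terms share a Fubini step.
  rw [← integral_prod_mul (fun q : ℝ × ℝ => |cdf μ q.1 - cdf μ q.2|)
      (fun q : ℝ × ℝ => |cdf μ' q.1 - cdf μ' q.2|),
    integral_abs_cdf_sub_mul_abs_cdf_sub μ μ' measurable_fst.fst measurable_snd.fst
      measurable_fst.snd measurable_snd.snd,
    integral_abs_cdf_sub_mul_abs_cdf_sub μ μ' measurable_fst.fst measurable_fst.snd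
      measurable_snd.fst measurable_snd.snd,
    integral_abs_cdf_sub_mul_abs_cdf_sub μ μ' measurable_fst.fst measurable_snd.fst.fst
      measurable_fst.snd measurable_snd.snd.snd,
    ← integral_const_mul, ← integral_add, ← integral_sub, ← integral_const_mul]
  · exact integral_congr_ae (ae_of_all _ fun z => dcov_indicator_Ici_eq_sq hμ hμ' z.1 z.2)
  · exact (integrable_integral_of_abs_le_one (by fun_prop) fun _ _ =>
      abs_abs_indicator_one_sub_mul_le_one _ _ _ _ _ _).add
      (integrable_integral_of_abs_le_one (by fun_prop) fun _ _ =>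
        abs_abs_indicator_one_sub_mul_le_one _ _ _ _ _ _)
  · exact (integrable_integral_of_abs_le_one (by fun_prop) fun _ _ =>
      abs_abs_indicator_one_sub_mul_le_one _ _ _ _ _ _).const_mul 2
  all_goals exact integrable_integral_of_abs_le_one (by fun_prop) fun _ _ =>
    abs_abs_indicator_one_sub_mul_le_one _ _ _ _ _ _

/-- Equivalence of the population rank distance covariance with the modified Hoeffding
functional in one dimension: for `(X,Y)` with absolutely continuous marginal distribution
functions `F, G` and joint distribution function `F^{X,Y}`,
`RdCov²(X,Y) = 4 ∫∫ (F^{X,Y}(x,y) − F(x)G(y))² dF(x) dG(y)`. -/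
theorem stmt9
    {Ω : Type*} [MeasurableSpace Ω] (P : Measure Ω) [IsProbabilityMeasure P]
    (X Y : Ω → ℝ) (hX : Measurable X) (hY : Measurable Y)
    (hacX : Measure.map X P ≪ volume) (hacY : Measure.map Y P ≪ volume)
    (F G : ℝ → ℝ) (Fxy : ℝ → ℝ → ℝ)
    (hF : ∀ x, F x = (P {ω | X ω ≤ x}).toReal)
    (hG : ∀ y, G y = (P {ω | Y ω ≤ y}).toReal)
    (hFxy : ∀ x y, Fxy x y = (P {ω | X ω ≤ x ∧ Y ω ≤ y}).toReal)
    (ν : Measure (ℝ × ℝ)) (hν : ν = Measure.map (fun ω => (X ω, Y ω)) P) :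
    (∫ p : (ℝ × ℝ) × (ℝ × ℝ), |F p.1.1 - F p.2.1| * |G p.1.2 - G p.2.2| ∂ ν.prod ν)
      + (∫ q : ℝ × ℝ, |F q.1 - F q.2| ∂ (Measure.map X P).prod (Measure.map X P))
        * (∫ q : ℝ × ℝ, |G q.1 - G q.2| ∂ (Measure.map Y P).prod (Measure.map Y P))
      - 2 * (∫ p : (ℝ × ℝ) × (ℝ × ℝ) × (ℝ × ℝ),
          |F p.1.1 - F p.2.1.1| * |G p.1.2 - G p.2.2.2| ∂ ν.prod (ν.prod ν))
    = 4 * ∫ q : ℝ × ℝ, (Fxy q.1 q.2 - F q.1 * G q.2) ^ 2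
        ∂ (Measure.map X P).prod (Measure.map Y P) := by
  have hXY : Measurable fun ω => (X ω, Y ω) := hX.prodMk hY
  have : IsProbabilityMeasure ν := hν ▸ Measure.isProbabilityMeasure_map hXY.aemeasurable
  have : IsProbabilityMeasure (P.map X) := Measure.isProbabilityMeasure_map hX.aemeasurable
  have : IsProbabilityMeasure (P.map Y) := Measure.isProbabilityMeasure_map hY.aemeasurable
  have : NullSingletonClass (P.map X) := ⟨fun x => hacX (measure_singleton x)⟩
  have : NullSingletonClass (P.map Y) := ⟨fun y => hacY (measure_singleton y)⟩
  obtain rfl : F = cdf (P.map X) := funext fun x => by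
    rw [hF, cdf_eq_real, map_measureReal_apply hX measurableSet_Iic]; rfl
  obtain rfl : G = cdf (P.map Y) := funext fun y => by
    rw [hG, cdf_eq_real, map_measureReal_apply hY measurableSet_Iic]; rfl
  obtain rfl : Fxy = fun x y => ν.real (Iic x ×ˢ Iic y) := funext₂ fun x y => by
    rw [hFxy, hν, map_measureReal_apply hXY (measurableSet_Iic.prod measurableSet_Iic)]; rfl
  refine rankDCov_eq_four_mul_integral_sq ?_ ?_ <;>
    rw [hν, Measure.map_map (by fun_prop) hXY] <;> rfl
end

section
/- Let x_1,…,x_n be distinct reals and y_1,…,y_n be distinct reals. Define the one-dimensional empirical ranks r_k := n^{-1}·#{j ≤ n : x_j ≤ x_k} and s_k := n^{-1}·#{j ≤ n : y_j ≤ y_k}, and the empirical distribution functions F_n^{X,Y}(x,y) := n^{-1}·#{k : x_k ≤ x and y_k ≤ y}, F_n^X(x) := n^{-1}·#{k : x_k ≤ x}, F_n^Y(y) := n^{-1}·#{k : y_k ≤ y}. Set S_1 := n^{-2} Σ_{k,l} |r_k − r_l|·|s_k − s_l|, S_2 := (n^{-2} Σ_{k,l} |r_k − r_l|)·(n^{-2}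 Σ_{k,l} |s_k − s_l|), and S_3 := n^{-3} Σ_{k,l,m} |r_k − r_l|·|s_k − s_m|. Then S_1 + S_2 − 2 S_3 = 4 n^{-2} Σ_{i=1}^n Σ_{j=1}^n ( F_n^{X,Y}(x_i, y_j) − F_n^X(x_i)·F_n^Y(y_j) )²; i.e., one quarter of the empirical rank distance covariance equals the empirical modified Hoeffding statistic ∫ (F_n^{X,Y} − F_n^X F_n^Y)² dF_n^X dF_n^Y. -/
open scoped BigOperators Classical
open Finset

noncomputable section


lemma sum_lin {n : ℕ} (c d : Fin n → ℝ) (α β γ δ : ℝ) :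
    ∑ k, (α * (c k * d k) + β * c k + γ * d k + δ)
      = α * (∑ k, c k * d k) + β * (∑ k, c k) + γ * (∑ k, d k) + n * δ := by
  simp [Finset.sum_add_distrib, ← Finset.mul_sum, Finset.card_univ, mul_comm]

lemma inner_pair {n : ℕ} (c d : Fin n → ℝ) (hc : ∀ k, c k = 0 ∨ c k = 1)
    (hd : ∀ k, d k = 0 ∨ d k = 1) (k : Fin n) :
    ∑ l, (c k - c l)^2 * (d k - d l)^2
      = (1 - 2*c k - 2*d k + 4*(c k * d k)) * (∑ l, c l * d l)
        + (d k - 2*(c k * d k)) * (∑ l, c l)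
        + (c k - 2*(c k * d k)) * (∑ l, d l)
        + (n : ℝ) * (c k * d k) := by
  have h : ∀ l ∈ univ, (c k - c l)^2 * (d k - d l)^2
      = (1 - 2*c k - 2*d k + 4*(c k * d k)) * (c l * d l)
        + (d k - 2*(c k * d k)) * c l
        + (c k - 2*(c k * d k)) * d l
        + (c k * d k) := by
    intro l _
    rcases hc k with h1 | h1 <;> rcases hc l with h2 | h2 <;>
      rcases hd k with h3 | h3 <;> rcases hd l with h4 | h4 <;>
      rw [h1, h2, h3, h4] <;> norm_num
  rw [Finset.sum_congr rfl h, sum_lin]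


lemma double_pair {n : ℕ} (c d : Fin n → ℝ) (hc : ∀ k, c k = 0 ∨ c k = 1)
    (hd : ∀ k, d k = 0 ∨ d k = 1) :
    ∑ k, ∑ l, (c k - c l)^2 * (d k - d l)^2
      = 2*(n:ℝ)*(∑ k, c k * d k) + 2*(∑ k, c k)*(∑ k, d k)
        - 4*(∑ k, c k * d k)*(∑ k, d k) - 4*(∑ k, c k)*(∑ k, c k * d k)
        + 4*(∑ k, c k * d k)^2 := by
  set p := ∑ k, c k with hp
  set q := ∑ k, d k with hq
  set t := ∑ k, c k * d k with ht
  have h : ∀ k ∈ univ, ∑ l, (c k - c l)^2 * (d k - d l)^2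
      = ((n:ℝ) - 2*q - 2*p + 4*t) * (c k * d k) + (q - 2*t) * c k + (p - 2*t) * d k + t := by
    intro k _
    rw [inner_pair c d hc hd k]
    ring
  rw [Finset.sum_congr rfl h, sum_lin]
  ring

lemma inner_single {n : ℕ} (c : Fin n → ℝ) (hc : ∀ k, c k = 0 ∨ c k = 1) (k : Fin n) :
    ∑ l, (c k - c l)^2 = (n:ℝ) * c k + (∑ l, c l) - 2 * c k * (∑ l, c l) := by
  have h : ∀ l ∈ univ, (c k - c l)^2
      = (-2 * c k) * (c l * c l) + 1 * c l + 0 * c l + c k := by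
    intro l _
    rcases hc k with h1 | h1 <;> rcases hc l with h2 | h2 <;> rw [h1, h2] <;> norm_num
  have hcc : ∑ l, c l * c l = ∑ l, c l :=
    Finset.sum_congr rfl fun l _ => by rcases hc l with h | h <;> rw [h] <;> norm_num
  rw [Finset.sum_congr rfl h, sum_lin, hcc]
  ring

lemma double_single {n : ℕ} (c : Fin n → ℝ) (hc : ∀ k, c k = 0 ∨ c k = 1) :
    ∑ k, ∑ l, (c k - c l)^2 = 2*(n:ℝ)*(∑ k, c k) - 2*(∑ k, c k)^2 := by
  set p := ∑ k, c k with hp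
  have h : ∀ k ∈ univ, ∑ l, (c k - c l)^2
      = 0 * (c k * c k) + ((n:ℝ) - 2*p) * c k + 0 * c k + p := by
    intro k _
    rw [inner_single c hc k]; ring
  rw [Finset.sum_congr rfl h, sum_lin]
  ring

lemma triple_pair {n : ℕ} (c d : Fin n → ℝ) (hc : ∀ k, c k = 0 ∨ c k = 1)
    (hd : ∀ k, d k = 0 ∨ d k = 1) :
    ∑ k, ∑ l, ∑ m, (c k - c l)^2 * (d k - d m)^2
      = (n:ℝ)^2*(∑ k, c k * d k) + 3*(n:ℝ)*(∑ k, c k)*(∑ k, d k)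
        - 2*(n:ℝ)*(∑ k, d k)*(∑ k, c k * d k) - 2*(n:ℝ)*(∑ k, c k)*(∑ k, c k * d k)
        - 2*(∑ k, c k)*(∑ k, d k)^2 - 2*(∑ k, c k)^2*(∑ k, d k)
        + 4*(∑ k, c k)*(∑ k, d k)*(∑ k, c k * d k) := by
  set p := ∑ k, c k with hp
  set q := ∑ k, d k with hq
  set t := ∑ k, c k * d k with ht
  have h : ∀ k ∈ univ, ∑ l, ∑ m, (c k - c l)^2 * (d k - d m)^2
      = ((n:ℝ)^2 - 2*(n:ℝ)*q - 2*(n:ℝ)*p + 4*p*q) * (c k * d k)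
        + ((n:ℝ)*q - 2*p*q) * c k + ((n:ℝ)*p - 2*p*q) * d k + p*q := by
    intro k _
    have : ∑ l, ∑ m, (c k - c l)^2 * (d k - d m)^2
        = (∑ l, (c k - c l)^2) * (∑ m, (d k - d m)^2) := (Finset.sum_mul_sum _ _ _ _).symm
    rw [this, inner_single c hc k, inner_single d hd k]
    ring
  rw [Finset.sum_congr rfl h, sum_lin]
  ring

lemma card_le_add {n : ℕ} (x : Fin n → ℝ) (hx : Function.Injective x) (a : Fin n) :
    ((Finset.univ.filter fun j => x j ≤ x a).card : ℝ)
      + ((Finset.univ.filter fun i => x a ≤ x i).card : ℝ) = n + 1 := by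
  classical
  have hu : (Finset.univ.filter fun j => x j ≤ x a) ∪ (Finset.univ.filter fun i => x a ≤ x i)
      = Finset.univ := by
    ext i; simp [le_total]
  have hi : (Finset.univ.filter fun j => x j ≤ x a) ∩ (Finset.univ.filter fun i => x a ≤ x i)
      = {a} := by
    ext i
    simp only [Finset.mem_inter, Finset.mem_filter, Finset.mem_univ, true_and,
      Finset.mem_singleton]
    constructor
    · rintro ⟨h1, h2⟩; exact hx (le_antisymm h1 h2)
    · rintro rfl; exact ⟨le_rfl, le_rfl⟩
  have h := Finset.card_union_add_card_inter (Finset.univ.filter fun j => x j ≤ x a)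
    (Finset.univ.filter fun i => x a ≤ x i)
  rw [hu, hi, Finset.card_univ, Fintype.card_fin, Finset.card_singleton] at h
  exact_mod_cast h.symm

lemma rank_abs {n : ℕ} (x : Fin n → ℝ) (hx : Function.Injective x) (k l : Fin n) :
    |((Finset.univ.filter fun j => x j ≤ x k).card : ℝ) / n
      - ((Finset.univ.filter fun j => x j ≤ x l).card : ℝ) / n|
    = (∑ i, ((if x k ≤ x i then (1:ℝ) else 0) - (if x l ≤ x i then (1:ℝ) else 0))^2) / n := by
  classical
  have key : ∀ a b : Fin n, x b ≤ x a →
      ∑ i, ((if x a ≤ x i then (1:ℝ) else 0) - (if x b ≤ x i then (1:ℝ) else 0))^2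
        = ((Finset.univ.filter fun j => x j ≤ x a).card : ℝ)
          - ((Finset.univ.filter fun j => x j ≤ x b).card : ℝ) := by
    intro a b hab
    have e1 : ∀ i ∈ Finset.univ, ((if x a ≤ x i then (1:ℝ) else 0) - (if x b ≤ x i then (1:ℝ) else 0))^2
        = (if x b ≤ x i then (1:ℝ) else 0) - (if x a ≤ x i then (1:ℝ) else 0) := by
      intro i _
      by_cases h1 : x a ≤ x i
      · have h2 : x b ≤ x i := le_trans hab h1
        simp [h1, h2]
      · by_cases h2 : x b ≤ x i <;> simp [h1, h2]
    rw [Finset.sum_congr rfl e1, Finset.sum_sub_distrib, Finset.sum_boole, Finset.sum_boole]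
    have h3 := card_le_add x hx a
    have h4 := card_le_add x hx b
    push_cast at h3 h4 ⊢
    linarith
  have main : ∀ a b : Fin n, x b ≤ x a →
      |((Finset.univ.filter fun j => x j ≤ x a).card : ℝ) / n
        - ((Finset.univ.filter fun j => x j ≤ x b).card : ℝ) / n|
      = (∑ i, ((if x a ≤ x i then (1:ℝ) else 0) - (if x b ≤ x i then (1:ℝ) else 0))^2) / n := by
    intro a b hab
    have hk := key a b hab
    have hnn : (0:ℝ) ≤ ∑ i, ((if x a ≤ x i then (1:ℝ) else 0) - (if x b ≤ x i then (1:ℝ) else 0))^2 :=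
      Finset.sum_nonneg fun i _ => sq_nonneg _
    rw [div_sub_div_same, abs_div, abs_of_nonneg (Nat.cast_nonneg n : (0:ℝ) ≤ n),
      abs_of_nonneg (by linarith), ← hk]
  rcases le_total (x l) (x k) with h | h
  · exact main k l h
  · rw [abs_sub_comm]
    rw [main l k h]
    congr 1
    exact Finset.sum_congr rfl fun i _ => by ring

lemma swap3 {n : ℕ} (f : Fin n → Fin n → Fin n → ℝ) :
    ∑ k : Fin n, ∑ l : Fin n, ∑ i : Fin n, f i k l
      = ∑ i : Fin n, ∑ k : Fin n, ∑ l : Fin n, f i k l := by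
  calc ∑ k : Fin n, ∑ l : Fin n, ∑ i : Fin n, f i k l
      = ∑ k : Fin n, ∑ i : Fin n, ∑ l : Fin n, f i k l :=
        Finset.sum_congr rfl fun k _ => Finset.sum_comm
    _ = ∑ i : Fin n, ∑ k : Fin n, ∑ l : Fin n, f i k l := Finset.sum_comm

lemma swap4 {n : ℕ} (f : Fin n → Fin n → Fin n → Fin n → ℝ) :
    ∑ k : Fin n, ∑ l : Fin n, ∑ i : Fin n, ∑ j : Fin n, f i j k l
      = ∑ i : Fin n, ∑ j : Fin n, ∑ k : Fin n, ∑ l : Fin n, f i j k l := by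
  calc ∑ k : Fin n, ∑ l : Fin n, ∑ i : Fin n, ∑ j : Fin n, f i j k l
      = ∑ k : Fin n, ∑ i : Fin n, ∑ l : Fin n, ∑ j : Fin n, f i j k l :=
        Finset.sum_congr rfl fun k _ => Finset.sum_comm
    _ = ∑ i : Fin n, ∑ k : Fin n, ∑ l : Fin n, ∑ j : Fin n, f i j k l := Finset.sum_comm
    _ = ∑ i : Fin n, ∑ k : Fin n, ∑ j : Fin n, ∑ l : Fin n, f i j k l :=
        Finset.sum_congr rfl fun i _ => Finset.sum_congr rfl fun k _ => Finset.sum_comm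
    _ = ∑ i : Fin n, ∑ j : Fin n, ∑ k : Fin n, ∑ l : Fin n, f i j k l :=
        Finset.sum_congr rfl fun i _ => Finset.sum_comm

lemma swap5 {n : ℕ} (f : Fin n → Fin n → Fin n → Fin n → Fin n → ℝ) :
    ∑ k : Fin n, ∑ l : Fin n, ∑ m : Fin n, ∑ i : Fin n, ∑ j : Fin n, f i j k l m
      = ∑ i : Fin n, ∑ j : Fin n, ∑ k : Fin n, ∑ l : Fin n, ∑ m : Fin n, f i j k l m := by
  calc ∑ k : Fin n, ∑ l : Fin n, ∑ m : Fin n, ∑ i : Fin n, ∑ j : Fin n, f i j k l m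
      = ∑ k : Fin n, ∑ l : Fin n, ∑ i : Fin n, ∑ m : Fin n, ∑ j : Fin n, f i j k l m :=
        Finset.sum_congr rfl fun k _ => Finset.sum_congr rfl fun l _ => Finset.sum_comm
    _ = ∑ k : Fin n, ∑ i : Fin n, ∑ l : Fin n, ∑ m : Fin n, ∑ j : Fin n, f i j k l m :=
        Finset.sum_congr rfl fun k _ => Finset.sum_comm
    _ = ∑ i : Fin n, ∑ k : Fin n, ∑ l : Fin n, ∑ m : Fin n, ∑ j : Fin n, f i j k l m :=
        Finset.sum_comm
    _ = ∑ i : Fin n, ∑ k : Fin n, ∑ l : Fin n, ∑ j : Fin n, ∑ m : Fin n, f i j k l m :=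
        Finset.sum_congr rfl fun i _ => Finset.sum_congr rfl fun k _ =>
          Finset.sum_congr rfl fun l _ => Finset.sum_comm
    _ = ∑ i : Fin n, ∑ k : Fin n, ∑ j : Fin n, ∑ l : Fin n, ∑ m : Fin n, f i j k l m :=
        Finset.sum_congr rfl fun i _ => Finset.sum_congr rfl fun k _ => Finset.sum_comm
    _ = ∑ i : Fin n, ∑ j : Fin n, ∑ k : Fin n, ∑ l : Fin n, ∑ m : Fin n, f i j k l m :=
        Finset.sum_congr rfl fun i _ => Finset.sum_comm


/-- The empirical rank distance covariance in one dimension equals four times the empirical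
modified Hoeffding statistic: with one-dimensional empirical ranks `r, s` from the grid
`{1/n,…,n/n}` and the empirical distribution functions, `S₁ + S₂ − 2S₃ =
(4/n²) ∑_{i,j} (F_n^{X,Y}(x_i,y_j) − F_n^X(x_i) F_n^Y(y_j))²`. -/
theorem stmt10
    (n : ℕ) (x y : Fin n → ℝ)
    (hx : Function.Injective x) (hy : Function.Injective y)
    (r s : Fin n → ℝ)
    (hr : ∀ k, r k = ((Finset.univ.filter fun j => x j ≤ x k).card : ℝ) / n)
    (hs : ∀ k, s k = ((Finset.univ.filter fun j => y j ≤ y k).card : ℝ) / n)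
    (Fxy : ℝ → ℝ → ℝ) (Fx Fy : ℝ → ℝ)
    (hFxy : ∀ a b, Fxy a b = ((Finset.univ.filter fun k => x k ≤ a ∧ y k ≤ b).card : ℝ) / n)
    (hFx : ∀ a, Fx a = ((Finset.univ.filter fun k => x k ≤ a).card : ℝ) / n)
    (hFy : ∀ b, Fy b = ((Finset.univ.filter fun k => y k ≤ b).card : ℝ) / n) :
    (∑ k, ∑ l, |r k - r l| * |s k - s l|) / (n : ℝ) ^ 2
      + ((∑ k, ∑ l, |r k - r l|) / (n : ℝ) ^ 2) * ((∑ k, ∑ l, |s k - s l|) / (n : ℝ) ^ 2)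
      - 2 * ((∑ k, ∑ l, ∑ m, |r k - r l| * |s k - s m|) / (n : ℝ) ^ 3)
    = 4 / (n : ℝ) ^ 2 * ∑ i, ∑ j, (Fxy (x i) (y j) - Fx (x i) * Fy (y j)) ^ 2 := by
  rcases Nat.eq_zero_or_pos n with hn0 | hn0
  · subst hn0; simp
  have hn : (n:ℝ) ≠ 0 := Nat.cast_ne_zero.mpr hn0.ne'
  set c : Fin n → Fin n → ℝ := fun i k => if x k ≤ x i then 1 else 0 with hcdef
  set d : Fin n → Fin n → ℝ := fun j k => if y k ≤ y j then 1 else 0 with hddef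
  have hc01 : ∀ i k, c i k = 0 ∨ c i k = 1 := fun i k => by
    by_cases h : x k ≤ x i <;> simp [hcdef, h]
  have hd01 : ∀ j k, d j k = 0 ∨ d j k = 1 := fun j k => by
    by_cases h : y k ≤ y j <;> simp [hddef, h]
  have A1 : ∀ k l, |r k - r l| = (∑ i, (c i k - c i l)^2) / n := by
    intro k l
    rw [hr k, hr l]
    simpa [hcdef] using rank_abs x hx k l
  have A2 : ∀ k l, |s k - s l| = (∑ j, (d j k - d j l)^2) / n := by
    intro k l
    rw [hs k, hs l]
    simpa [hddef] using rank_abs y hy k l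
  set P : Fin n → ℝ := fun i => ∑ k, c i k with hPdef
  set Q : Fin n → ℝ := fun j => ∑ k, d j k with hQdef
  set T : Fin n → Fin n → ℝ := fun i j => ∑ k, c i k * d j k with hTdef
  have A3 : ∀ i j, Fxy (x i) (y j) = T i j / n := by
    intro i j
    rw [hFxy]
    congr 1
    rw [← Finset.sum_boole]
    simp only [hTdef, hcdef, hddef]
    exact Finset.sum_congr rfl fun k _ => by
      by_cases h1 : x k ≤ x i <;> by_cases h2 : y k ≤ y j <;> simp [h1, h2]
  have A4 : ∀ i, Fx (x i) = P i / n := by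
    intro i
    rw [hFx]
    congr 1
    rw [← Finset.sum_boole]

  have A5 : ∀ j, Fy (y j) = Q j / n := by
    intro j
    rw [hFy]
    congr 1
    rw [← Finset.sum_boole]

  have E1 : ∑ k, ∑ l, |r k - r l| * |s k - s l|
      = (∑ i, ∑ j, (2*(n:ℝ)*T i j + 2*P i*Q j - 4*T i j*Q j - 4*P i*T i j + 4*(T i j)^2))
          / (n:ℝ)^2 := by
    have step : ∀ k l : Fin n, |r k - r l| * |s k - s l|
        = (∑ i, ∑ j, (c i k - c i l)^2 * (d j k - d j l)^2) / (n:ℝ)^2 := by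
      intro k l
      rw [A1 k l, A2 k l, div_mul_div_comm, Finset.sum_mul_sum, ← pow_two]
    calc ∑ k, ∑ l, |r k - r l| * |s k - s l|
        = ∑ k, ∑ l, (∑ i, ∑ j, (c i k - c i l)^2 * (d j k - d j l)^2) / (n:ℝ)^2 :=
          Finset.sum_congr rfl fun k _ => Finset.sum_congr rfl fun l _ => step k l
      _ = (∑ k, ∑ l, ∑ i, ∑ j, (c i k - c i l)^2 * (d j k - d j l)^2) / (n:ℝ)^2 := by
          rw [Finset.sum_div]
          exact Finset.sum_congr rfl fun k _ => (Finset.sum_div _ _ _).symm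
      _ = (∑ i, ∑ j, ∑ k, ∑ l, (c i k - c i l)^2 * (d j k - d j l)^2) / (n:ℝ)^2 := by
          rw [swap4]
      _ = _ := by
          congr 1
          refine Finset.sum_congr rfl fun i _ => Finset.sum_congr rfl fun j _ => ?_
          simp only [hPdef, hQdef, hTdef]
          exact double_pair (fun k => c i k) (fun k => d j k) (hc01 i) (hd01 j)
  have E2 : ∑ k, ∑ l, |r k - r l| = (∑ i, (2*(n:ℝ)*P i - 2*(P i)^2)) / n := by
    calc ∑ k, ∑ l, |r k - r l|
        = ∑ k, ∑ l, (∑ i, (c i k - c i l)^2) / (n:ℝ) :=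
          Finset.sum_congr rfl fun k _ => Finset.sum_congr rfl fun l _ => A1 k l
      _ = (∑ k, ∑ l, ∑ i, (c i k - c i l)^2) / n := by
          rw [Finset.sum_div]
          exact Finset.sum_congr rfl fun k _ => (Finset.sum_div _ _ _).symm
      _ = (∑ i, ∑ k, ∑ l, (c i k - c i l)^2) / n := by rw [swap3]
      _ = _ := by
          congr 1
          refine Finset.sum_congr rfl fun i _ => ?_
          simp only [hPdef]
          exact double_single (fun k => c i k) (hc01 i)
  have E2' : ∑ k, ∑ l, |s k - s l| = (∑ j, (2*(n:ℝ)*Q j - 2*(Q j)^2)) / n := by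
    calc ∑ k, ∑ l, |s k - s l|
        = ∑ k, ∑ l, (∑ j, (d j k - d j l)^2) / (n:ℝ) :=
          Finset.sum_congr rfl fun k _ => Finset.sum_congr rfl fun l _ => A2 k l
      _ = (∑ k, ∑ l, ∑ j, (d j k - d j l)^2) / n := by
          rw [Finset.sum_div]
          exact Finset.sum_congr rfl fun k _ => (Finset.sum_div _ _ _).symm
      _ = (∑ j, ∑ k, ∑ l, (d j k - d j l)^2) / n := by rw [swap3]
      _ = _ := by
          congr 1
          refine Finset.sum_congr rfl fun j _ => ?_
          simp only [hQdef]
          exact double_single (fun k => d j k) (hd01 j)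
  have E3 : ∑ k, ∑ l, ∑ m, |r k - r l| * |s k - s m|
      = (∑ i, ∑ j, ((n:ℝ)^2*T i j + 3*(n:ℝ)*P i*Q j - 2*(n:ℝ)*Q j*T i j
          - 2*(n:ℝ)*P i*T i j - 2*P i*(Q j)^2 - 2*(P i)^2*Q j + 4*P i*Q j*T i j))
          / (n:ℝ)^2 := by
    have step : ∀ k l m : Fin n, |r k - r l| * |s k - s m|
        = (∑ i, ∑ j, (c i k - c i l)^2 * (d j k - d j m)^2) / (n:ℝ)^2 := by
      intro k l m
      rw [A1 k l, A2 k m, div_mul_div_comm, Finset.sum_mul_sum, ← pow_two]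
    calc ∑ k, ∑ l, ∑ m, |r k - r l| * |s k - s m|
        = ∑ k, ∑ l, ∑ m, (∑ i, ∑ j, (c i k - c i l)^2 * (d j k - d j m)^2) / (n:ℝ)^2 :=
          Finset.sum_congr rfl fun k _ => Finset.sum_congr rfl fun l _ =>
            Finset.sum_congr rfl fun m _ => step k l m
      _ = (∑ k, ∑ l, ∑ m, ∑ i, ∑ j, (c i k - c i l)^2 * (d j k - d j m)^2) / (n:ℝ)^2 := by
          rw [Finset.sum_div]
          refine Finset.sum_congr rfl fun k _ => ?_
          rw [Finset.sum_div]
          exact Finset.sum_congr rfl fun l _ => (Finset.sum_div _ _ _).symm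
      _ = (∑ i, ∑ j, ∑ k, ∑ l, ∑ m, (c i k - c i l)^2 * (d j k - d j m)^2) / (n:ℝ)^2 := by
          rw [swap5]
      _ = _ := by
          congr 1
          refine Finset.sum_congr rfl fun i _ => Finset.sum_congr rfl fun j _ => ?_
          simp only [hPdef, hQdef, hTdef]
          exact triple_pair (fun k => c i k) (fun k => d j k) (hc01 i) (hd01 j)
  have hRHS : ∑ i, ∑ j, (Fxy (x i) (y j) - Fx (x i) * Fy (y j))^2
      = ∑ i, ∑ j, (T i j / n - (P i / n) * (Q j / n))^2 :=
    Finset.sum_congr rfl fun i _ => Finset.sum_congr rfl fun j _ => by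
      rw [A3 i j, A4 i, A5 j]
  rw [E1, E2, E2', E3, hRHS]
  have t1 : (∑ i, ∑ j, (2*(n:ℝ)*T i j + 2*P i*Q j - 4*T i j*Q j - 4*P i*T i j + 4*(T i j)^2))
        / (n:ℝ)^2 / (n:ℝ)^2
      = ∑ i, ∑ j, (2*(n:ℝ)*T i j + 2*P i*Q j - 4*T i j*Q j - 4*P i*T i j + 4*(T i j)^2)
          / ((n:ℝ)^2*(n:ℝ)^2) := by
    rw [div_div, Finset.sum_div]
    exact Finset.sum_congr rfl fun i _ => Finset.sum_div _ _ _
  have t2 : ((∑ i, (2*(n:ℝ)*P i - 2*(P i)^2)) / (n:ℝ) / (n:ℝ)^2)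
        * ((∑ j, (2*(n:ℝ)*Q j - 2*(Q j)^2)) / (n:ℝ) / (n:ℝ)^2)
      = ∑ i, ∑ j, ((2*(n:ℝ)*P i - 2*(P i)^2) * (2*(n:ℝ)*Q j - 2*(Q j)^2))
          / (((n:ℝ)*(n:ℝ)^2)*((n:ℝ)*(n:ℝ)^2)) := by
    rw [div_div, div_div, div_mul_div_comm, Finset.sum_mul_sum, Finset.sum_div]
    exact Finset.sum_congr rfl fun i _ => Finset.sum_div _ _ _
  have t3 : 2 * ((∑ i, ∑ j, ((n:ℝ)^2*T i j + 3*(n:ℝ)*P i*Q j - 2*(n:ℝ)*Q j*T i j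
          - 2*(n:ℝ)*P i*T i j - 2*P i*(Q j)^2 - 2*(P i)^2*Q j + 4*P i*Q j*T i j))
          / (n:ℝ)^2 / (n:ℝ)^3)
      = ∑ i, ∑ j, 2 * (((n:ℝ)^2*T i j + 3*(n:ℝ)*P i*Q j - 2*(n:ℝ)*Q j*T i j
          - 2*(n:ℝ)*P i*T i j - 2*P i*(Q j)^2 - 2*(P i)^2*Q j + 4*P i*Q j*T i j)
          / ((n:ℝ)^2*(n:ℝ)^3)) := by
    rw [div_div, Finset.sum_div, Finset.mul_sum]
    refine Finset.sum_congr rfl fun i _ => ?_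
    rw [Finset.sum_div, Finset.mul_sum]
  have t4 : 4 / (n:ℝ)^2 * ∑ i, ∑ j, (T i j / n - (P i / n) * (Q j / n))^2
      = ∑ i, ∑ j, 4 / (n:ℝ)^2 * (T i j / n - (P i / n) * (Q j / n))^2 := by
    rw [Finset.mul_sum]
    exact Finset.sum_congr rfl fun i _ => Finset.mul_sum _ _ _
  rw [t1, t2, t3, t4]
  have combine : ∀ (F G H : Fin n → Fin n → ℝ),
      (∑ i, ∑ j, F i j) + (∑ i, ∑ j, G i j) - (∑ i, ∑ j, H i j)
        = ∑ i, ∑ j, (F i j + G i j - H i j) := by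
    intro F G H
    rw [← Finset.sum_add_distrib, ← Finset.sum_sub_distrib]
    exact Finset.sum_congr rfl fun i _ => by
      rw [← Finset.sum_add_distrib, ← Finset.sum_sub_distrib]
  rw [combine]
  refine Finset.sum_congr rfl fun i _ => Finset.sum_congr rfl fun j _ => ?_
  field_simp
  ring

end
end

section
/- Fix λ ∈ (0,1). Let X be a real random variable with absolutely continuous distribution function F and law μ_X, and Y a real random variable with absolutely continuous distribution function G and law μ_Y. Put H := λF + (1−λ)G, the distribution function of the mixture λμ_X + (1−λ)μ_Y. Let X_1, X_2 be i.i.d. copies of X and Y_1, Y_2 be i.i.d. copies of Y, all four mutually independent. Then 2·E|H(X_1) − H(Y_1)| − E|H(X_1) − H(X_2)| − E|H(Y_1) − H(Y_2)| = 2 ∫_ℝ (F(t) − G(t))² d(λμ_X + (1−λ)μ_Y)(t); i.e., one half of the population rank energy RE_λ²(X,Y) equals the population two-sample Cramér–von Mises functional ∫ (F − G)² dH. -/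
/-! With `ν` the mixture and `H x = ν (-∞, x]`, one has
`|H x - H y| = ∫ |1{t ≤ x} - 1{t ≤ y}| dν(t)`. Swapping the integrals, and using
`|u - v| = u + v - 2uv` on `{0, 1}`, the energy term for independent `X ~ μ`, `Y ~ μ'` becomes
`∫ (a + b - 2ab) dν` with `a t = μ [t, ∞)`, `b t = μ' [t, ∞)`. The energy combination then
integrates `2 (a + b - 2ab) - (2a - 2a²) - (2b - 2b²) = 2 (a - b)²`, and for atomless laws
`a - b = G - F`. -/

open MeasureTheory Set

lemma abs_sub_indicator_one {α : Type*} (s : Set α) (a b : α) :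
    |s.indicator (1 : α → ℝ) a - s.indicator 1 b|
      = s.indicator 1 a + s.indicator 1 b - 2 * (s.indicator 1 a * s.indicator 1 b) := by
  by_cases ha : a ∈ s <;> by_cases hb : b ∈ s <;> norm_num [ha, hb]

lemma integral_abs_sub_indicator_one_prod {α : Type*} [MeasurableSpace α] {s : Set α}
    (hs : MeasurableSet s) (μ μ' : Measure α) [IsProbabilityMeasure μ] [IsProbabilityMeasure μ'] :
    ∫ p, |s.indicator (1 : α → ℝ) p.1 - s.indicator 1 p.2| ∂μ.prod μ'
      = μ.real s + μ'.real s - 2 * (μ.real s * μ'.real s) := by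
  have hint : Integrable (s.indicator (1 : α → ℝ)) μ := (integrable_const 1).indicator hs
  have hint' : Integrable (s.indicator (1 : α → ℝ)) μ' := (integrable_const 1).indicator hs
  simp_rw [abs_sub_indicator_one]
  rw [integral_sub, integral_add, integral_const_mul, integral_prod_mul, integral_fun_fst,
    integral_fun_snd, integral_indicator_one hs, integral_indicator_one hs, probReal_univ,
    probReal_univ, one_smul, one_smul]
  · exact hint.comp_fst μ'
  · exact hint'.comp_snd μ
  · exact (hint.comp_fst μ').add (hint'.comp_snd μ)
  · exact (hint.mul_prod hint').const_mul 2

lemma abs_sub_measureReal_Iic (ν : Measure ℝ) [IsFiniteMeasure ν] (x y : ℝ) :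
    |ν.real (Iic x) - ν.real (Iic y)|
      = ∫ t, |(Ici t).indicator (1 : ℝ → ℝ) x - (Ici t).indicator 1 y| ∂ν := by
  wlog hyx : y ≤ x generalizing x y
  · simpa only [abs_sub_comm] using this y x (le_of_not_ge hyx)
  have hle : (Iic y).indicator (1 : ℝ → ℝ) ≤ (Iic x).indicator 1 :=
    indicator_le_indicator_of_subset (Iic_subset_Iic.2 hyx) fun _ => zero_le_one
  change _ = ∫ t, |(Iic x).indicator (1 : ℝ → ℝ) t - (Iic y).indicator 1 t| ∂ν
  rw [abs_of_nonneg (sub_nonneg.2 (measureReal_mono (Iic_subset_Iic.2 hyx))),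
    integral_congr_ae (ae_of_all _ fun t => abs_of_nonneg (sub_nonneg.2 (hle t))),
    integral_sub ((integrable_const 1).indicator measurableSet_Iic)
      ((integrable_const 1).indicator measurableSet_Iic),
    integral_indicator_one measurableSet_Iic, integral_indicator_one measurableSet_Iic]

lemma integrable_abs_sub_indicator_Ici (κ : Measure ((ℝ × ℝ) × ℝ)) [IsFiniteMeasure κ] :
    Integrable (fun q => |(Ici q.2).indicator (1 : ℝ → ℝ) q.1.1 - (Ici q.2).indicator 1 q.1.2|)
      κ := by
  have h₁ : MeasurableSet {q : (ℝ × ℝ) × ℝ | q.2 ≤ q.1.1} :=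
    measurableSet_le measurable_snd measurable_fst.fst
  have h₂ : MeasurableSet {q : (ℝ × ℝ) × ℝ | q.2 ≤ q.1.2} :=
    measurableSet_le measurable_snd measurable_fst.snd
  have hmeas : Measurable fun q : (ℝ × ℝ) × ℝ =>
      |(Ici q.2).indicator (1 : ℝ → ℝ) q.1.1 - (Ici q.2).indicator 1 q.1.2| :=
    ((measurable_const.indicator h₁).sub (measurable_const.indicator h₂)).abs
  refine Integrable.of_bound hmeas.aestronglyMeasurable 1 (ae_of_all _ fun q => ?_)
  rw [Real.norm_eq_abs, abs_abs]
  by_cases hq₁ : q.2 ≤ q.1.1 <;> by_cases hq₂ : q.2 ≤ q.1.2 <;> simp [hq₁, hq₂]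

lemma integral_abs_sub_measureReal_Iic_prod (μ μ' ν : Measure ℝ) [IsProbabilityMeasure μ]
    [IsProbabilityMeasure μ'] [IsFiniteMeasure ν] :
    ∫ p : ℝ × ℝ, |ν.real (Iic p.1) - ν.real (Iic p.2)| ∂μ.prod μ'
      = ∫ t, (μ.real (Ici t) + μ'.real (Ici t) - 2 * (μ.real (Ici t) * μ'.real (Ici t))) ∂ν := by
  simp_rw [abs_sub_measureReal_Iic ν]
  rw [integral_integral_swap (integrable_abs_sub_indicator_Ici _)]
  simp_rw [integral_abs_sub_indicator_one_prod measurableSet_Ici]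

lemma measurable_measureReal_Ici (μ : Measure ℝ) [IsFiniteMeasure μ] :
    Measurable fun t => μ.real (Ici t) :=
  Antitone.measurable fun _ _ h => measureReal_mono (Ici_subset_Ici.2 h)

lemma norm_measureReal_le_one {α : Type*} [MeasurableSpace α] (μ : Measure α)
    [IsProbabilityMeasure μ] (s : Set α) : ‖μ.real s‖ ≤ 1 := by
  rw [Real.norm_of_nonneg measureReal_nonneg]
  exact measureReal_le_one

lemma integrable_measureReal_Ici (μ ν : Measure ℝ) [IsProbabilityMeasure μ] [IsFiniteMeasure ν] :
    Integrable (fun t => μ.real (Ici t)) ν :=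
  .of_bound (measurable_measureReal_Ici μ).aestronglyMeasurable 1
    (ae_of_all _ fun _ => norm_measureReal_le_one μ _)

lemma integrable_measureReal_Ici_mul (μ μ' ν : Measure ℝ) [IsProbabilityMeasure μ]
    [IsProbabilityMeasure μ'] [IsFiniteMeasure ν] :
    Integrable (fun t => μ.real (Ici t) * μ'.real (Ici t)) ν :=
  (integrable_measureReal_Ici μ' ν).bdd_mul (measurable_measureReal_Ici μ).aestronglyMeasurable
    (ae_of_all _ fun _ => norm_measureReal_le_one μ _)

lemma two_mul_integral_abs_sub_measureReal_Iic_prod_sub (μ μ' ν : Measure ℝ)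
    [IsProbabilityMeasure μ] [IsProbabilityMeasure μ'] [IsFiniteMeasure ν] :
    2 * (∫ p : ℝ × ℝ, |ν.real (Iic p.1) - ν.real (Iic p.2)| ∂μ.prod μ')
      - (∫ p : ℝ × ℝ, |ν.real (Iic p.1) - ν.real (Iic p.2)| ∂μ.prod μ)
      - (∫ p : ℝ × ℝ, |ν.real (Iic p.1) - ν.real (Iic p.2)| ∂μ'.prod μ')
    = 2 * ∫ t, (μ.real (Ici t) - μ'.real (Ici t)) ^ 2 ∂ν := by
  have hint : ∀ (κ κ' : Measure ℝ) [IsProbabilityMeasure κ] [IsProbabilityMeasure κ'],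
      Integrable (fun t => κ.real (Ici t) + κ'.real (Ici t)
        - 2 * (κ.real (Ici t) * κ'.real (Ici t))) ν := fun κ κ' _ _ =>
    ((integrable_measureReal_Ici κ ν).add (integrable_measureReal_Ici κ' ν)).sub
      ((integrable_measureReal_Ici_mul κ κ' ν).const_mul 2)
  simp only [integral_abs_sub_measureReal_Iic_prod]
  rw [← integral_const_mul, ← integral_sub ((hint μ μ').const_mul 2) (hint μ μ),
    ← integral_sub ?_ (hint μ' μ'), ← integral_const_mul]
  · congr 1 with t
    ring
  · exact ((hint μ μ').const_mul 2).sub (hint μ μ)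

lemma measureReal_Ici_eq_one_sub (μ : Measure ℝ) [IsProbabilityMeasure μ] {t : ℝ}
    (ht : μ {t} = 0) : μ.real (Ici t) = 1 - μ.real (Iic t) := by
  rw [← measureReal_congr (Ioi_ae_eq_Ici' ht), ← compl_Iic,
    probReal_compl_eq_one_sub measurableSet_Iic]

lemma measureReal_ofReal_smul_add_ofReal_smul {α : Type*} [MeasurableSpace α] (μ μ' : Measure α)
    [IsFiniteMeasure μ] [IsFiniteMeasure μ'] {a b : ℝ} (ha : 0 ≤ a) (hb : 0 ≤ b) (s : Set α) :
    (ENNReal.ofReal a • μ + ENNReal.ofReal b • μ').real s = a * μ.real s + b * μ'.real s := by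
  rw [measureReal_add_apply (by simp [ENNReal.mul_eq_top]) (by simp [ENNReal.mul_eq_top]),
    measureReal_ennreal_smul_apply, measureReal_ennreal_smul_apply,
    ENNReal.toReal_ofReal ha, ENNReal.toReal_ofReal hb]

lemma isProbabilityMeasure_ofReal_smul_add_ofReal_smul {α : Type*} [MeasurableSpace α]
    (μ μ' : Measure α) [IsProbabilityMeasure μ] [IsProbabilityMeasure μ'] {a : ℝ} (ha₀ : 0 ≤ a)
    (ha₁ : a ≤ 1) : IsProbabilityMeasure (ENNReal.ofReal a • μ + ENNReal.ofReal (1 - a) • μ') := by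
  constructor
  simp only [Measure.add_apply, Measure.smul_apply, measure_univ, smul_eq_mul, mul_one]
  rw [← ENNReal.ofReal_add ha₀ (sub_nonneg.2 ha₁), add_sub_cancel, ENNReal.ofReal_one]

/-- Equivalence of the population rank energy with the two-sample Cramér–von Mises functional
in one dimension: for absolutely continuous laws `μ_X, μ_Y` on `ℝ` with distribution
functions `F, G`, mixture distribution function `H = λF + (1−λ)G`, one has
`2 E|H(X₁)−H(Y₁)| − E|H(X₁)−H(X₂)| − E|H(Y₁)−H(Y₂)| = 2 ∫ (F−G)² d(λμ_X + (1−λ)μ_Y)`. -/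
theorem stmt14
    (lam : ℝ) (hlam : lam ∈ Set.Ioo (0 : ℝ) 1)
    (μX μY : Measure ℝ) [IsProbabilityMeasure μX] [IsProbabilityMeasure μY]
    (hacX : μX ≪ volume) (hacY : μY ≪ volume)
    (F G H : ℝ → ℝ)
    (hF : ∀ t, F t = (μX (Set.Iic t)).toReal)
    (hG : ∀ t, G t = (μY (Set.Iic t)).toReal)
    (hH : ∀ t, H t = lam * F t + (1 - lam) * G t) :
    2 * (∫ p : ℝ × ℝ, |H p.1 - H p.2| ∂ μX.prod μY)
      - (∫ p : ℝ × ℝ, |H p.1 - H p.2| ∂ μX.prod μX)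
      - (∫ p : ℝ × ℝ, |H p.1 - H p.2| ∂ μY.prod μY)
    = 2 * ∫ t, (F t - G t) ^ 2
        ∂ (ENNReal.ofReal lam • μX + ENNReal.ofReal (1 - lam) • μY) := by
  obtain ⟨hlam₀, hlam₁⟩ := hlam
  simp only [← measureReal_def] at hF hG
  set ν := ENNReal.ofReal lam • μX + ENNReal.ofReal (1 - lam) • μY
  have : IsProbabilityMeasure ν :=
    isProbabilityMeasure_ofReal_smul_add_ofReal_smul μX μY hlam₀.le hlam₁.le
  have hHν : H = fun x => ν.real (Iic x) := funext fun x => by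
    rw [hH, hF, hG, measureReal_ofReal_smul_add_ofReal_smul μX μY hlam₀.le (sub_nonneg.2 hlam₁.le)]
  have hFG : ∀ t, (F t - G t) ^ 2 = (μX.real (Ici t) - μY.real (Ici t)) ^ 2 := fun t => by
    rw [measureReal_Ici_eq_one_sub μX (hacX (Real.volume_singleton)),
      measureReal_Ici_eq_one_sub μY (hacY (Real.volume_singleton)), hF, hG]
    ring
  simp_rw [hHν, hFG]
  exact two_mul_integral_abs_sub_measureReal_Iic_prod_sub μX μY ν
end

section
/- Let x_1,…,x_m, y_1,…,y_n be m+n distinct reals. Let H(z) := (m+n)^{-1}·#{pooled sample points ≤ z} be the pooled empirical distribution function, F_m(z) := m^{-1}·#{i : x_i ≤ z}, and G_n(z) := n^{-1}·#{j : y_j ≤ z}. Then (2/(mn)) Σ_{i=1}^m Σ_{j=1}^n |H(x_i) − H(y_j)| − m^{-2} Σ_{i,j=1}^m |H(x_i) − H(x_j)| − n^{-2} Σ_{i,j=1}^n |H(y_i) − H(y_j)| = 2 (m+n)^{-1} Σ_{z} (F_m(z) − G_n(z))², where the last sum ranges over the m+n pooled sample points z; i.e., one half of the rank energy statistic RE²_{m,n}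 computed with the one-dimensional grid {k/(m+n) : 1 ≤ k ≤ m+n} equals the two-sample Cramér–von Mises statistic ∫ (F_m − G_n)² dH. -/
open scoped BigOperators Classical

noncomputable section

/-- The one-dimensional rank energy statistic equals twice the two-sample Cramér–von Mises
statistic: with pooled empirical distribution function `H` (the one-dimensional empirical
ranks from the grid `{k/(m+n)}`), `F_m`, `G_n` the two empirical distribution functions,
`(2/(mn)) ∑∑ |H(x_i)−H(y_j)| − m⁻² ∑∑ |H(x_i)−H(x_j)| − n⁻² ∑∑ |H(y_i)−H(y_j)|
  = (2/(m+n)) ∑_z (F_m(z)−G_n(z))²`, the last sum ranging over the pooled sample points. -/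
theorem stmt15
    (m n : ℕ) (hm : 0 < m) (hn : 0 < n)
    (x : Fin m → ℝ) (y : Fin n → ℝ)
    (hdist : Function.Injective (Sum.elim x y))
    (H Fm Gn : ℝ → ℝ)
    (hH : ∀ z, H z =
      ((Finset.univ.filter fun k : Fin m ⊕ Fin n => Sum.elim x y k ≤ z).card : ℝ) / (m + n))
    (hFm : ∀ z, Fm z = ((Finset.univ.filter fun i : Fin m => x i ≤ z).card : ℝ) / m)
    (hGn : ∀ z, Gn z = ((Finset.univ.filter fun j : Fin n => y j ≤ z).card : ℝ) / n) :
    2 / ((m : ℝ) * n) * ∑ i, ∑ j, |H (x i) - H (y j)|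
      - 1 / (m : ℝ) ^ 2 * ∑ i, ∑ j, |H (x i) - H (x j)|
      - 1 / (n : ℝ) ^ 2 * ∑ i, ∑ j, |H (y i) - H (y j)|
    = 2 / ((m : ℝ) + n) *
        ∑ k : Fin m ⊕ Fin n, (Fm (Sum.elim x y k) - Gn (Sum.elim x y k)) ^ 2 := by
  classical
  have hm' : ((m:ℝ)) ≠ 0 := Nat.cast_ne_zero.mpr hm.ne'
  have hn' : ((n:ℝ)) ≠ 0 := Nat.cast_ne_zero.mpr hn.ne'
  have hN : ((m:ℝ) + n) ≠ 0 := by positivity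
  set p : Fin m ⊕ Fin n → ℝ := Sum.elim x y with hp
  set c : ℝ → ℝ → ℝ := fun z w => if z < w then 1 else 0 with hc
  -- Step A : card of ≤-filter at a sample point is strict count + 1
  have cardA : ∀ k₀ : Fin m ⊕ Fin n,
      ((Finset.univ.filter fun k => p k ≤ p k₀).card : ℝ)
        = (∑ k, c (p k) (p k₀)) + 1 := by
    intro k₀
    have hset : (Finset.univ.filter fun k => p k ≤ p k₀)
        = insert k₀ (Finset.univ.filter fun k => p k < p k₀) := by
      ext k
      simp only [Finset.mem_filter, Finset.mem_insert, Finset.mem_univ, true_and]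
      constructor
      · intro h
        rcases lt_or_eq_of_le h with h | h
        · exact Or.inr h
        · exact Or.inl (hdist h)
      · rintro (rfl | h)
        · exact le_rfl
        · exact h.le
    have hcount : (∑ k, c (p k) (p k₀))
        = ((Finset.univ.filter fun k => p k < p k₀).card : ℝ) := by
      simp [hc, Finset.sum_boole]
    rw [hset, Finset.card_insert_of_notMem (by simp), hcount]
    push_cast; ring
  -- Step B : |H u - H v| formula
  have key0 : ∀ k₁ k₂ : Fin m ⊕ Fin n, p k₁ ≤ p k₂ →
      |H (p k₁) - H (p k₂)| = (∑ k, |c (p k) (p k₁) - c (p k) (p k₂)|) / ((m:ℝ)+n) := by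
    intro k₁ k₂ hle
    have hmono : ∀ k, c (p k) (p k₁) ≤ c (p k) (p k₂) := by
      intro k
      simp only [hc]
      split_ifs with h1 h2 <;>
        first
          | exact absurd (lt_of_lt_of_le h1 hle) h2
          | norm_num
    have habs : ∀ k, |c (p k) (p k₁) - c (p k) (p k₂)| = c (p k) (p k₂) - c (p k) (p k₁) := by
      intro k
      rw [abs_sub_comm, abs_of_nonneg (sub_nonneg.mpr (hmono k))]
    have hAB : (∑ k, c (p k) (p k₁)) ≤ ∑ k, c (p k) (p k₂) :=
      Finset.sum_le_sum fun k _ => hmono k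
    have hNpos : (0:ℝ) < (m:ℝ) + n := by positivity
    rw [hH, hH, cardA, cardA]
    have hrw : ((∑ k, c (p k) (p k₁)) + 1) / ((m:ℝ)+n) - ((∑ k, c (p k) (p k₂)) + 1) / ((m:ℝ)+n)
        = ((∑ k, c (p k) (p k₁)) - (∑ k, c (p k) (p k₂))) / ((m:ℝ)+n) := by ring
    rw [hrw, abs_div, abs_of_pos hNpos, abs_sub_comm, abs_of_nonneg (sub_nonneg.mpr hAB)]
    congr 1
    simp only [habs]
    rw [Finset.sum_sub_distrib]
  have key : ∀ k₁ k₂ : Fin m ⊕ Fin n,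
      |H (p k₁) - H (p k₂)| = (∑ k, |c (p k) (p k₁) - c (p k) (p k₂)|) / ((m:ℝ)+n) := by
    intro k₁ k₂
    rcases le_total (p k₁) (p k₂) with h | h
    · exact key0 k₁ k₂ h
    · rw [abs_sub_comm, key0 k₂ k₁ h]
      congr 1
      exact Finset.sum_congr rfl fun k _ => abs_sub_comm _ _
  -- indicator algebra
  have absid : ∀ z u v : ℝ, |c z u - c z v| = c z u + c z v - 2 * (c z u * c z v) := by
    intro z u v
    simp only [hc]
    split_ifs <;> norm_num
  -- sums of indicators vs empirical cdfs
  have hS : ∀ z : ℝ, (∑ i, c z (x i)) = (m:ℝ) * (1 - Fm z) := by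
    intro z
    have h1 : (∑ i, c z (x i)) = ((Finset.univ.filter fun i => z < x i).card : ℝ) := by
      simp [hc, Finset.sum_boole]
    have h2 : (Finset.univ.filter fun i : Fin m => x i ≤ z).card
        + (Finset.univ.filter fun i : Fin m => z < x i).card = m := by
      have h := Finset.card_filter_add_card_filter_not
        (s := (Finset.univ : Finset (Fin m))) (p := fun i => x i ≤ z)
      simpa [not_le] using h
    have h2' : ((Finset.univ.filter fun i : Fin m => x i ≤ z).card : ℝ)
        + ((Finset.univ.filter fun i : Fin m => z < x i).card : ℝ) = m := by
      exact_mod_cast h2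
    rw [h1, hFm]
    field_simp
    linarith
  have hT : ∀ z : ℝ, (∑ j, c z (y j)) = (n:ℝ) * (1 - Gn z) := by
    intro z
    have h1 : (∑ j, c z (y j)) = ((Finset.univ.filter fun j => z < y j).card : ℝ) := by
      simp [hc, Finset.sum_boole]
    have h2 : (Finset.univ.filter fun j : Fin n => y j ≤ z).card
        + (Finset.univ.filter fun j : Fin n => z < y j).card = n := by
      have h := Finset.card_filter_add_card_filter_not
        (s := (Finset.univ : Finset (Fin n))) (p := fun j => y j ≤ z)
      simpa [not_le] using h
    have h2' : ((Finset.univ.filter fun j : Fin n => y j ≤ z).card : ℝ)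
        + ((Finset.univ.filter fun j : Fin n => z < y j).card : ℝ) = n := by
      exact_mod_cast h2
    rw [h1, hGn]
    field_simp
    linarith
  -- generic double-sum expansion
  have expand : ∀ {α β : Type} [Fintype α] [Fintype β] (a : α → ℝ) (b : β → ℝ),
      ∑ i, ∑ j, (a i + b j - 2 * (a i * b j))
        = (Fintype.card β : ℝ) * (∑ i, a i) + (Fintype.card α : ℝ) * (∑ j, b j)
          - 2 * ((∑ i, a i) * (∑ j, b j)) := by
    intro α β _ _ a b
    simp only [Finset.sum_sub_distrib, Finset.sum_add_distrib, Finset.sum_const,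
      Finset.card_univ, nsmul_eq_mul, ← Finset.mul_sum, ← Finset.sum_mul]
  -- per-point identity
  have perk : ∀ k : Fin m ⊕ Fin n,
      2 / ((m:ℝ) * n) * (∑ i, ∑ j, |c (p k) (x i) - c (p k) (y j)|)
        - 1 / (m:ℝ) ^ 2 * (∑ i, ∑ j, |c (p k) (x i) - c (p k) (x j)|)
        - 1 / (n:ℝ) ^ 2 * (∑ i, ∑ j, |c (p k) (y i) - c (p k) (y j)|)
      = 2 * (Fm (p k) - Gn (p k)) ^ 2 := by
    intro k
    set z := p k with hz
    have e1 : (∑ i, ∑ j, |c z (x i) - c z (y j)|)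
        = (n:ℝ) * (∑ i, c z (x i)) + (m:ℝ) * (∑ j, c z (y j))
          - 2 * ((∑ i, c z (x i)) * (∑ j, c z (y j))) := by
      rw [show (∑ i, ∑ j, |c z (x i) - c z (y j)|)
          = ∑ i, ∑ j, (c z (x i) + c z (y j) - 2 * (c z (x i) * c z (y j))) from
        Finset.sum_congr rfl fun i _ => Finset.sum_congr rfl fun j _ => absid z (x i) (y j)]
      simpa using expand (fun i => c z (x i)) (fun j => c z (y j))
    have e2 : (∑ i, ∑ j, |c z (x i) - c z (x j)|)
        = (m:ℝ) * (∑ i, c z (x i)) + (m:ℝ) * (∑ j, c z (x j))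
          - 2 * ((∑ i, c z (x i)) * (∑ j, c z (x j))) := by
      rw [show (∑ i, ∑ j, |c z (x i) - c z (x j)|)
          = ∑ i, ∑ j, (c z (x i) + c z (x j) - 2 * (c z (x i) * c z (x j))) from
        Finset.sum_congr rfl fun i _ => Finset.sum_congr rfl fun j _ => absid z (x i) (x j)]
      simpa using expand (fun i => c z (x i)) (fun j => c z (x j))
    have e3 : (∑ i, ∑ j, |c z (y i) - c z (y j)|)
        = (n:ℝ) * (∑ i, c z (y i)) + (n:ℝ) * (∑ j, c z (y j))
          - 2 * ((∑ i, c z (y i)) * (∑ j, c z (y j))) := by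
      rw [show (∑ i, ∑ j, |c z (y i) - c z (y j)|)
          = ∑ i, ∑ j, (c z (y i) + c z (y j) - 2 * (c z (y i) * c z (y j))) from
        Finset.sum_congr rfl fun i _ => Finset.sum_congr rfl fun j _ => absid z (y i) (y j)]
      simpa using expand (fun i => c z (y i)) (fun j => c z (y j))
    rw [e1, e2, e3, hS z, hT z]
    field_simp
    ring
  -- rewrite the three double sums of |H - H| via key, swap sums
  have key_xy : ∀ i j, |H (x i) - H (y j)|
      = (∑ k, |c (p k) (x i) - c (p k) (y j)|) / ((m:ℝ)+n) := fun i j => key (.inl i) (.inr j)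
  have key_xx : ∀ i j, |H (x i) - H (x j)|
      = (∑ k, |c (p k) (x i) - c (p k) (x j)|) / ((m:ℝ)+n) := fun i j => key (.inl i) (.inl j)
  have key_yy : ∀ i j, |H (y i) - H (y j)|
      = (∑ k, |c (p k) (y i) - c (p k) (y j)|) / ((m:ℝ)+n) := fun i j => key (.inr i) (.inr j)
  have swap3 : ∀ {α β γ : Type} [Fintype α] [Fintype β] [Fintype γ] (f : α → β → γ → ℝ),
      ∑ a, ∑ b, ∑ g, f a b g = ∑ g : γ, ∑ a, ∑ b, f a b g := by
    intro α β γ _ _ _ f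
    calc ∑ a, ∑ b, ∑ g, f a b g
        = ∑ a, ∑ g, ∑ b, f a b g := Finset.sum_congr rfl fun a _ => Finset.sum_comm
      _ = ∑ g, ∑ a, ∑ b, f a b g := Finset.sum_comm
  have s1 : (∑ i, ∑ j, |H (x i) - H (y j)|)
      = (∑ k, ∑ i, ∑ j, |c (p k) (x i) - c (p k) (y j)|) / ((m:ℝ)+n) := by
    simp_rw [key_xy, ← Finset.sum_div]
    congr 1
    exact swap3 _
  have s2 : (∑ i, ∑ j, |H (x i) - H (x j)|)
      = (∑ k, ∑ i, ∑ j, |c (p k) (x i) - c (p k) (x j)|) / ((m:ℝ)+n) := by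
    simp_rw [key_xx, ← Finset.sum_div]
    congr 1
    exact swap3 _
  have s3 : (∑ i, ∑ j, |H (y i) - H (y j)|)
      = (∑ k, ∑ i, ∑ j, |c (p k) (y i) - c (p k) (y j)|) / ((m:ℝ)+n) := by
    simp_rw [key_yy, ← Finset.sum_div]
    congr 1
    exact swap3 _
  rw [s1, s2, s3]
  have hsum : 2 / ((m:ℝ) * n) * (∑ k, ∑ i, ∑ j, |c (p k) (x i) - c (p k) (y j)|)
      - 1 / (m:ℝ) ^ 2 * (∑ k, ∑ i, ∑ j, |c (p k) (x i) - c (p k) (x j)|)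
      - 1 / (n:ℝ) ^ 2 * (∑ k, ∑ i, ∑ j, |c (p k) (y i) - c (p k) (y j)|)
      = 2 * ∑ k : Fin m ⊕ Fin n, (Fm (p k) - Gn (p k)) ^ 2 := by
    rw [Finset.mul_sum, Finset.mul_sum, Finset.mul_sum, Finset.mul_sum,
      ← Finset.sum_sub_distrib, ← Finset.sum_sub_distrib]
    exact Finset.sum_congr rfl fun k _ => perk k
  linear_combination hsum / ((m:ℝ) + n)



end
end
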